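/- arXiv:2009.04349 — 6 statements merged into one kernel-verified Lean document; each statement's English description precedes it below -/
import Mathlib

section
/- If Q ∈ K[x] is a key polynomial for a valuation ν on K[x], then Q is irreducible. -/
open Polynomial

variable {K : Type*} [Field K]

/-- `ν` is a (rank one, real-valued) valuation on `K[x]`, specified on nonzero
polynomials. -/
def IsVal {K : Type*} [Field K] (ν : Polynomial K → ℝ) : Prop :=
  (∀ f g : Polynomial K, f ≠ 0 → g ≠ 0 → ν (f * g) = ν f + ν g) ∧
  (∀ f g : Polynomial K, f ≠ 0 → g ≠ 0 → f + g ≠ 0 → min (ν f) (ν g) ≤ ν (f + g))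

/-- The level `ε(f)` of a nonzero polynomial: the maximum of
`(ν f - ν (∂_b f))/b` over `b ≥ 1` (with `∂_b` the Hasse derivatives). -/
noncomputable def eps {K : Type*} [Field K] (ν : Polynomial K → ℝ) (f : Polynomial K) : ℝ :=
  sSup {r : ℝ | ∃ b : ℕ, 1 ≤ b ∧ hasseDeriv b f ≠ 0 ∧ r = (ν f - ν (hasseDeriv b f)) / b}

/-- The set `I(f)` of indices where the bound `ν(∂_b f) ≥ ν f - b ε(f)` is an equality. -/
def Iset {K : Type*} [Field K] (ν : Polynomial K → ℝ) (f : Polynomial K) : Set ℕ :=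
  {b | 1 ≤ b ∧ hasseDeriv b f ≠ 0 ∧ ν (hasseDeriv b f) = ν f - b * eps ν f}

/-- `Q` is a key polynomial for `ν`. -/
def IsKeyPol {K : Type*} [Field K] (ν : Polynomial K → ℝ) (Q : Polynomial K) : Prop :=
  Q.Monic ∧ 0 < Q.natDegree ∧
    ∀ f : Polynomial K, f ≠ 0 → f.natDegree < Q.natDegree → eps ν f < eps ν Q

/-- The coefficients of the `Q`-expansion of `f`:  `f = Σ i, qc Q f i * Q ^ i`
with `deg (qc Q f i) < deg Q`. -/
noncomputable def qc {K : Type*} [Field K] (Q : Polynomial K) : Polynomial K → ℕ → Polynomial K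
  | f, 0 => f %ₘ Q
  | f, (i + 1) => qc Q (f /ₘ Q) i

/-- The degree of the `Q`-expansion of `f`. -/
def degQ {K : Type*} [Field K] (Q f : Polynomial K) : ℕ := f.natDegree / Q.natDegree

/-- The truncation `ν_Q(f) = min_i ν (f_i Q^i)` of `ν` at `Q`. -/
noncomputable def nuQ {K : Type*} [Field K] (ν : Polynomial K → ℝ) (Q f : Polynomial K) : ℝ :=
  sInf {r : ℝ | ∃ i : ℕ, qc Q f i ≠ 0 ∧ r = ν (qc Q f i * Q ^ i)}

/-- The set `S_Q(f)` of indices attaining the minimum in `ν_Q(f)`. -/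
def SQ {K : Type*} [Field K] (ν : Polynomial K → ℝ) (Q f : Polynomial K) : Set ℕ :=
  {i | qc Q f i ≠ 0 ∧ ν (qc Q f i * Q ^ i) = nuQ ν Q f}

/-- `δ_Q(f) = max S_Q(f)`. -/
noncomputable def deltaQ {K : Type*} [Field K] (ν : Polynomial K → ℝ) (Q f : Polynomial K) : ℕ :=
  sSup (SQ ν Q f)

/-- The set `Ψ_α` of key polynomials for `ν` of degree `α`. -/
def Psi {K : Type*} [Field K] (ν : Polynomial K → ℝ) (α : ℕ) : Set (Polynomial K) :=
  {Q | IsKeyPol ν Q ∧ Q.natDegree = α}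

/-- The set `S_α` of (nonzero) polynomials whose value is not computed by any
truncation at a key polynomial of degree `α`. -/
def Slim {K : Type*} [Field K] (ν : Polynomial K → ℝ) (α : ℕ) : Set (Polynomial K) :=
  {f | f ≠ 0 ∧ ∀ Q ∈ Psi ν α, nuQ ν Q f < ν f}

/-- `p` is the characteristic exponent of the residue field of `ν`: either `p = 1`
and all nonzero natural numbers have value `0`, or `p` is a prime, `p` has
positive value (or is `0` in `K`), and naturals prime to `p` have value `0`. -/
def CharExp {K : Type*} [Field K] (ν : Polynomial K → ℝ) (p : ℕ) : Prop :=
  (p = 1 ∧ ∀ n : ℕ, (n : Polynomial K) ≠ 0 → ν (n : Polynomial K) = 0) ∨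
  (p.Prime ∧ ((p : Polynomial K) = 0 ∨ 0 < ν (p : Polynomial K)) ∧
    ∀ n : ℕ, ¬ p ∣ n → ν (n : Polynomial K) = 0)


section Aux
variable {K : Type*} [Field K]

lemma epsSet_bddAbove (ν : Polynomial K → ℝ) (f : Polynomial K) :
    BddAbove {r : ℝ | ∃ b : ℕ, 1 ≤ b ∧ hasseDeriv b f ≠ 0 ∧
      r = (ν f - ν (hasseDeriv b f)) / b} := by
  apply Set.Finite.bddAbove
  apply Set.Finite.subset
    ((Set.finite_Icc 1 f.natDegree).image (fun b => (ν f - ν (hasseDeriv b f)) / b))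
  rintro r ⟨b, hb1, hb0, rfl⟩
  refine ⟨b, ⟨hb1, ?_⟩, rfl⟩
  by_contra hcon
  push_neg at hcon
  apply hb0
  ext k
  rw [hasseDeriv_coeff, coeff_eq_zero_of_natDegree_lt (by omega)]
  simp

lemma nu_hasseDeriv_ge (ν : Polynomial K → ℝ) (f : Polynomial K) (b : ℕ)
    (hb : 1 ≤ b) (h : hasseDeriv b f ≠ 0) :
    ν f - b * eps ν f ≤ ν (hasseDeriv b f) := by
  have hmem : (ν f - ν (hasseDeriv b f)) / b ∈
      {r : ℝ | ∃ b : ℕ, 1 ≤ b ∧ hasseDeriv b f ≠ 0 ∧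
        r = (ν f - ν (hasseDeriv b f)) / b} := ⟨b, hb, h, rfl⟩
  have hle : (ν f - ν (hasseDeriv b f)) / b ≤ eps ν f :=
    le_csSup (epsSet_bddAbove ν f) hmem
  have hb' : (0 : ℝ) < b := by exact_mod_cast hb
  rw [div_le_iff₀ hb'] at hle
  linarith

lemma exists_nu_le_sum (ν : Polynomial K → ℝ) (hν : IsVal ν) {ι : Type*}
    (s : Finset ι) (F : ι → Polynomial K) (h : ∑ i ∈ s, F i ≠ 0) :
    ∃ i ∈ s, F i ≠ 0 ∧ ν (F i) ≤ ν (∑ i ∈ s, F i) := by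
  classical
  induction s using Finset.induction with
  | empty => simp at h
  | @insert a t ha ih =>
    rw [Finset.sum_insert ha] at h ⊢
    by_cases h1 : F a = 0
    · rw [h1, zero_add] at h ⊢
      obtain ⟨i, hi, h2, h3⟩ := ih h
      exact ⟨i, Finset.mem_insert_of_mem hi, h2, h3⟩
    by_cases h2 : ∑ i ∈ t, F i = 0
    · rw [h2, add_zero]
      exact ⟨a, Finset.mem_insert_self a t, h1, le_refl _⟩
    · obtain ⟨i, hi, h3, h4⟩ := ih h2
      have hmin := hν.2 (F a) (∑ i ∈ t, F i) h1 h2 h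
      rcases le_total (ν (F a)) (ν (∑ i ∈ t, F i)) with hle | hle
      · exact ⟨a, Finset.mem_insert_self a t, h1, by rwa [min_eq_left hle] at hmin⟩
      · exact ⟨i, Finset.mem_insert_of_mem hi, h3,
          le_trans h4 (by rwa [min_eq_right hle] at hmin)⟩

end Aux

/-- A key polynomial for `ν` is irreducible. -/
theorem keyPol_irreducible (ν : Polynomial K → ℝ) (hν : IsVal ν)
    (Q : Polynomial K) (hQ : IsKeyPol ν Q) : Irreducible Q := by
  obtain ⟨hmonic, hdegQ, hkey⟩ := hQ
  constructor
  · intro hu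
    have := Polynomial.natDegree_eq_zero_of_isUnit hu
    omega
  · intro a b hab
    by_contra hcon
    push_neg at hcon
    obtain ⟨hua, hub⟩ := hcon
    have hQ0 : Q ≠ 0 := hmonic.ne_zero
    have ha0 : a ≠ 0 := fun h => hQ0 (by simp [hab, h])
    have hb0 : b ≠ 0 := fun h => hQ0 (by simp [hab, h])
    have hda : 0 < a.natDegree := by
      rcases Nat.eq_zero_or_pos a.natDegree with h | h
      · obtain ⟨c, rfl⟩ := Polynomial.natDegree_eq_zero.mp h
        exact absurd (Polynomial.isUnit_C.mpr (isUnit_iff_ne_zero.mpr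
          (fun hc => ha0 (by simp [hc])))) hua
      · exact h
    have hdb : 0 < b.natDegree := by
      rcases Nat.eq_zero_or_pos b.natDegree with h | h
      · obtain ⟨c, rfl⟩ := Polynomial.natDegree_eq_zero.mp h
        exact absurd (Polynomial.isUnit_C.mpr (isUnit_iff_ne_zero.mpr
          (fun hc => hb0 (by simp [hc])))) hub
      · exact h
    have hdeg : Q.natDegree = a.natDegree + b.natDegree := by
      rw [hab, Polynomial.natDegree_mul ha0 hb0]
    have hea : eps ν a < eps ν Q := hkey a ha0 (by omega)
    have heb : eps ν b < eps ν Q := hkey b hb0 (by omega)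
    set M : ℝ := max (eps ν a) (eps ν b) with hM
    have hMQ : M < eps ν Q := max_lt hea heb
    -- key estimate: eps ν Q ≤ M
    have hbound : eps ν Q ≤ M := by
      apply csSup_le
      · refine ⟨(ν Q - ν (hasseDeriv Q.natDegree Q)) / Q.natDegree,
          Q.natDegree, hdegQ, ?_, rfl⟩
        intro hzero
        have : (hasseDeriv Q.natDegree Q).coeff 0 = 0 := by rw [hzero]; simp
        rw [hasseDeriv_coeff] at this
        simp only [zero_add, Nat.choose_self, Nat.cast_one, one_mul] at this
        exact one_ne_zero (hmonic.coeff_natDegree ▸ this)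
      · rintro r ⟨k, hk1, hk0, rfl⟩
        have hk' : (0 : ℝ) < k := by exact_mod_cast hk1
        rw [div_le_iff₀ hk']
        -- use Leibniz rule
        rw [hab, Polynomial.hasseDeriv_mul] at hk0 ⊢
        obtain ⟨ij, hijmem, hij0, hijle⟩ := exists_nu_le_sum ν hν _ _ hk0
        have hia : hasseDeriv ij.1 a ≠ 0 := left_ne_zero_of_mul hij0
        have hjb : hasseDeriv ij.2 b ≠ 0 := right_ne_zero_of_mul hij0
        have hsum : ij.1 + ij.2 = k := Finset.HasAntidiagonal.mem_antidiagonal.mp hijmem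
        have hνij : ν (hasseDeriv ij.1 a * hasseDeriv ij.2 b) =
            ν (hasseDeriv ij.1 a) + ν (hasseDeriv ij.2 b) := hν.1 _ _ hia hjb
        have hQab : ν (a * b) = ν a + ν b := hν.1 a b ha0 hb0
        have hba : ν a - ij.1 * M ≤ ν (hasseDeriv ij.1 a) := by
          rcases Nat.eq_zero_or_pos ij.1 with h | h
          · simp [h, hasseDeriv_zero']
          · refine le_trans ?_ (nu_hasseDeriv_ge ν a ij.1 h hia)
            have : (ij.1 : ℝ) * eps ν a ≤ ij.1 * M :=
              mul_le_mul_of_nonneg_left (le_max_left _ _) (by positivity)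
            linarith
        have hbb : ν b - ij.2 * M ≤ ν (hasseDeriv ij.2 b) := by
          rcases Nat.eq_zero_or_pos ij.2 with h | h
          · simp [h, hasseDeriv_zero']
          · refine le_trans ?_ (nu_hasseDeriv_ge ν b ij.2 h hjb)
            have : (ij.2 : ℝ) * eps ν b ≤ ij.2 * M :=
              mul_le_mul_of_nonneg_left (le_max_right _ _) (by positivity)
            linarith
        have hcast : (ij.1 : ℝ) + ij.2 = k := by exact_mod_cast congrArg Nat.cast hsum
        have hmulM : (ij.1 : ℝ) * M + (ij.2 : ℝ) * M = k * M := by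
          rw [← add_mul, hcast]
        linarith [hijle, hνij, hQab]
    exact absurd (lt_of_lt_of_le hMQ hbound) (lt_irrefl M)
end

section
/- Let Q be a key polynomial for ν and f ∈ K[x] with ε(f) < ε(Q). If f = qQ + r is the Euclidean division of f by Q (with deg(r) < deg(Q) or r = 0), then ν(f) = ν(r) < ν(qQ). -/
open Polynomial

variable {K : Type*} [Field K]

section AuxVal

variable (ν : Polynomial K → ℝ)

lemma val_one_aux (hν : IsVal ν) : ν 1 = 0 := by
  have h := hν.1 1 1 one_ne_zero one_ne_zero
  rw [mul_one] at h
  linarith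

lemma val_neg_aux (hν : IsVal ν) (a : Polynomial K) (ha : a ≠ 0) : ν (-a) = ν a := by
  have h1 : ν ((-1 : Polynomial K) * (-1)) = ν (-1 : Polynomial K) + ν (-1 : Polynomial K) :=
    hν.1 _ _ (by norm_num) (by norm_num)
  have h2 : ((-1 : Polynomial K) * (-1)) = 1 := by ring
  rw [h2, val_one_aux ν hν] at h1
  have hm1 : ν (-1 : Polynomial K) = 0 := by linarith
  have h3 := hν.1 (-1) a (by norm_num) ha
  rw [neg_one_mul] at h3
  rw [h3, hm1, zero_add]

lemma val_add_lt_aux (hν : IsVal ν) {a b : Polynomial K} (ha : a ≠ 0) (hb : b ≠ 0)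
    (hab : ν a < ν b) : a + b ≠ 0 ∧ ν (a + b) = ν a := by
  have hne : a + b ≠ 0 := by
    intro h
    have hba : b = -a := by linear_combination h
    rw [hba, val_neg_aux ν hν a ha] at hab
    exact lt_irrefl _ hab
  refine ⟨hne, le_antisymm ?_ ?_⟩
  · by_contra hgt
    push_neg at hgt
    have h3 := hν.2 (a + b) (-b) hne (neg_ne_zero.mpr hb) (by simpa [add_neg_cancel_right] using ha)
    rw [add_neg_cancel_right, val_neg_aux ν hν b hb] at h3
    have := lt_min hgt hab
    linarith [h3, lt_min hgt hab]
  · have h4 := hν.2 a b ha hb hne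
    calc ν a = min (ν a) (ν b) := (min_eq_left hab.le).symm
    _ ≤ ν (a + b) := h4

lemma val_sum_gt_aux (hν : IsVal ν) {ι : Type*} (s : Finset ι) (F : ι → Polynomial K) (c : ℝ)
    (h : ∀ j ∈ s, F j = 0 ∨ c < ν (F j)) :
    (∑ j ∈ s, F j) = 0 ∨ ((∑ j ∈ s, F j) ≠ 0 ∧ c < ν (∑ j ∈ s, F j)) := by
  classical
  induction s using Finset.cons_induction with
  | empty => simp
  | cons a s ha ih =>
    rw [Finset.sum_cons]
    have hs := ih (fun j hj => h j (Finset.mem_cons_of_mem hj))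
    have ha' := h a (Finset.mem_cons_self a s)
    by_cases hFa : F a = 0
    · rw [hFa, zero_add]; exact hs
    by_cases hsz : (∑ j ∈ s, F j) = 0
    · rw [hsz, add_zero]
      exact Or.inr ⟨hFa, ha'.resolve_left hFa⟩
    by_cases hz : F a + ∑ j ∈ s, F j = 0
    · exact Or.inl hz
    right
    refine ⟨hz, ?_⟩
    have h1 : c < ν (F a) := ha'.resolve_left hFa
    have h2 : c < ν (∑ j ∈ s, F j) := (hs.resolve_left hsz).2
    have h3 := hν.2 (F a) _ hFa hsz hz
    calc c < min (ν (F a)) (ν (∑ j ∈ s, F j)) := lt_min h1 h2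
    _ ≤ _ := h3

lemma val_sum_eq_aux (hν : IsVal ν) {ι : Type*} [DecidableEq ι] (s : Finset ι)
    (F : ι → Polynomial K) (i₀ : ι) (hi₀ : i₀ ∈ s) (hF : F i₀ ≠ 0)
    (h : ∀ j ∈ s, j ≠ i₀ → F j = 0 ∨ ν (F i₀) < ν (F j)) :
    (∑ j ∈ s, F j) ≠ 0 ∧ ν (∑ j ∈ s, F j) = ν (F i₀) := by
  rw [← Finset.add_sum_erase s F hi₀]
  have hrest := val_sum_gt_aux ν hν (s.erase i₀) F (ν (F i₀))
      (fun j hj => h j (Finset.mem_of_mem_erase hj) (Finset.ne_of_mem_erase hj))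
  rcases hrest with h0 | ⟨hne, hlt⟩
  · rw [h0, add_zero]; exact ⟨hF, rfl⟩
  · exact val_add_lt_aux ν hν hF hne hlt

lemma hasseDeriv_zero_of_lt {g : Polynomial K} {b : ℕ} (h : g.natDegree < b) :
    hasseDeriv b g = 0 := by
  ext n
  rw [hasseDeriv_coeff, coeff_eq_zero_of_natDegree_lt (lt_of_lt_of_le h (Nat.le_add_left b n)),
    mul_zero, coeff_zero]

lemma hasseDeriv_natDegree_ne {g : Polynomial K} (hg : g ≠ 0) :
    hasseDeriv g.natDegree g ≠ 0 := by
  intro h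
  have h0 := congrArg (fun p => Polynomial.coeff p 0) h
  simp only [hasseDeriv_coeff, zero_add, Nat.choose_self, Nat.cast_one, one_mul,
    coeff_zero] at h0
  exact hg (Polynomial.leadingCoeff_eq_zero.mp h0)

lemma epsSet_finite (f : Polynomial K) :
    {r : ℝ | ∃ b : ℕ, 1 ≤ b ∧ hasseDeriv b f ≠ 0 ∧
      r = (ν f - ν (hasseDeriv b f)) / b}.Finite := by
  apply Set.Finite.subset
    ((Set.finite_Icc 1 f.natDegree).image (fun b : ℕ => (ν f - ν (hasseDeriv b f)) / b))
  rintro r ⟨b, hb1, hbne, rfl⟩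
  refine ⟨b, ⟨hb1, ?_⟩, rfl⟩
  by_contra hgt
  exact hbne (hasseDeriv_zero_of_lt (lt_of_not_ge hgt))

lemma div_le_eps (f : Polynomial K) {b : ℕ} (hb : 1 ≤ b) (hne : hasseDeriv b f ≠ 0) :
    (ν f - ν (hasseDeriv b f)) / b ≤ eps ν f :=
  le_csSup (epsSet_finite ν f).bddAbove ⟨b, hb, hne, rfl⟩

lemma le_eps_val (f : Polynomial K) {b : ℕ} (hb : 1 ≤ b) (hne : hasseDeriv b f ≠ 0) :
    ν f - b * eps ν f ≤ ν (hasseDeriv b f) := by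
  have h := div_le_eps ν f hb hne
  have hb0 : (0:ℝ) < (b:ℝ) := by exact_mod_cast hb
  rw [div_le_iff₀ hb0] at h
  nlinarith

lemma eps_attain (f : Polynomial K) (hf : f ≠ 0) (hd : 1 ≤ f.natDegree) :
    ∃ b : ℕ, (1 ≤ b ∧ hasseDeriv b f ≠ 0 ∧ ν (hasseDeriv b f) = ν f - b * eps ν f) ∧
      ∀ c : ℕ, 1 ≤ c → hasseDeriv c f ≠ 0 →
        ν (hasseDeriv c f) = ν f - c * eps ν f → c ≤ b := by
  classical
  have hne : hasseDeriv f.natDegree f ≠ 0 := hasseDeriv_natDegree_ne hf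
  have hSne : {r : ℝ | ∃ b : ℕ, 1 ≤ b ∧ hasseDeriv b f ≠ 0 ∧
      r = (ν f - ν (hasseDeriv b f)) / b}.Nonempty := ⟨_, f.natDegree, hd, hne, rfl⟩
  have hmem := hSne.csSup_mem (epsSet_finite ν f)
  obtain ⟨b0, hb1, hbne, hbeq⟩ := hmem
  have hb00 : ((b0:ℝ)) ≠ 0 := Nat.cast_ne_zero.mpr (by omega)
  have heq0 : ν (hasseDeriv b0 f) = ν f - b0 * eps ν f := by
    have : eps ν f = (ν f - ν (hasseDeriv b0 f)) / b0 := hbeq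
    rw [eq_div_iff hb00] at this
    nlinarith [this]
  set P : ℕ → Prop := fun b =>
    1 ≤ b ∧ hasseDeriv b f ≠ 0 ∧ ν (hasseDeriv b f) = ν f - b * eps ν f with hP
  have hub : ∀ c, P c → c ≤ f.natDegree := by
    intro c hc
    by_contra hgt
    exact hc.2.1 (hasseDeriv_zero_of_lt (lt_of_not_ge hgt))
  have hPb0 : P b0 := ⟨hb1, hbne, heq0⟩
  refine ⟨Nat.findGreatest P f.natDegree,
    Nat.findGreatest_spec (hub b0 hPb0) hPb0, fun c hc1 hc2 hc3 => ?_⟩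
  exact Nat.le_findGreatest (hub c ⟨hc1, hc2, hc3⟩) ⟨hc1, hc2, hc3⟩

end AuxVal

set_option maxHeartbeats 1000000 in
/-- If `ε(f) < ε(Q)` and `f = q Q + r` is the Euclidean division of `f` by the key
polynomial `Q`, then `ν f = ν r < ν (q Q)`. -/
theorem val_modByMonic (ν : Polynomial K → ℝ) (hν : IsVal ν)
    (Q : Polynomial K) (hQ : IsKeyPol ν Q)
    (f : Polynomial K) (hf : f ≠ 0) (hεf : eps ν f < eps ν Q) :
    f %ₘ Q ≠ 0 ∧ ν f = ν (f %ₘ Q) ∧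
      (f /ₘ Q ≠ 0 → ν (f %ₘ Q) < ν (f /ₘ Q * Q)) := by
  classical
  obtain ⟨hmon, hdQ, hkey⟩ := hQ
  have hQ0 : Q ≠ 0 := hmon.ne_zero
  have hfeq : f %ₘ Q + f /ₘ Q * Q = f := by
    rw [mul_comm]; exact modByMonic_add_div f Q
  set q := f /ₘ Q with hqdef
  set r := f %ₘ Q with hrdef
  by_cases hq0 : q = 0
  · have hrf : r = f := by rw [← hfeq, hq0, zero_mul, add_zero]
    exact ⟨hrf ▸ hf, by rw [hrf], fun h => absurd hq0 h⟩
  have hqQ0 : q * Q ≠ 0 := mul_ne_zero hq0 hQ0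
  have hνmul : ∀ a b : Polynomial K, a ≠ 0 → b ≠ 0 → ν (a * b) = ν a + ν b := hν.1
  have key : r ≠ 0 ∧ ν r < ν (q * Q) := by
    by_contra hcon
    rw [not_and_or, not_not, not_lt] at hcon
    have hνlow : ν (q * Q) ≤ ν f := by
      rcases eq_or_ne r 0 with h | h
      · rw [← hfeq, h, zero_add]
      · have hle : ν (q * Q) ≤ ν r := hcon.resolve_left h
        have h2 := hν.2 r (q * Q) h hqQ0 (by rw [hfeq]; exact hf)
        rw [hfeq] at h2
        calc ν (q * Q) = min (ν r) (ν (q * Q)) := (min_eq_right hle).symm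
        _ ≤ ν f := h2
    set εQ := eps ν Q with hεQdef
    set εq := eps ν q with hεqdef
    have hrb : ∀ b : ℕ, 1 ≤ b → hasseDeriv b r ≠ 0 →
        ν (q * Q) - b * εQ < ν (hasseDeriv b r) := by
      intro b hb hne
      have hr0 : r ≠ 0 := by intro h; rw [h] at hne; simp at hne
      have hdr : r.natDegree < Q.natDegree :=
        natDegree_lt_natDegree hr0 (degree_modByMonic_lt f hmon)
      have hεr : eps ν r < εQ := hkey r hr0 hdr
      have h1 := le_eps_val ν r hb hne
      have hb1 : (1 : ℝ) ≤ (b : ℝ) := by exact_mod_cast hb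
      have hle : ν (q * Q) ≤ ν r := hcon.resolve_left hr0
      have hmul : (b : ℝ) * eps ν r < (b : ℝ) * εQ :=
        mul_lt_mul_of_pos_left hεr (by linarith)
      linarith
    obtain ⟨bQ, ⟨hbQ1, hbQne, hbQeq⟩, hbQmax⟩ := eps_attain ν Q hQ0 hdQ
    rw [← hεQdef] at hbQeq
    have hboundQ : ∀ j : ℕ, hasseDeriv j Q ≠ 0 → ν Q - j * εQ ≤ ν (hasseDeriv j Q) := by
      intro j hj
      rcases Nat.eq_zero_or_pos j with h0 | h1
      · subst h0; rw [hasseDeriv_zero']; push_cast; simp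
      · exact le_eps_val ν Q h1 hj
    have hνqQ : ν (q * Q) = ν q + ν Q := hνmul q Q hq0 hQ0
    obtain ⟨bq, bQ', hbsum, hq_ne, hQ_ne, hVle, hother⟩ :
        ∃ bq bQ' : ℕ, 1 ≤ bq + bQ' ∧ hasseDeriv bq q ≠ 0 ∧ hasseDeriv bQ' Q ≠ 0 ∧
          ν (hasseDeriv bq q * hasseDeriv bQ' Q) ≤ ν (q * Q) - ((bq + bQ' : ℕ) : ℝ) * εQ ∧
          ∀ i j : ℕ, i + j = bq + bQ' → (i, j) ≠ (bq, bQ') →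
            hasseDeriv i q * hasseDeriv j Q = 0 ∨
              ν (hasseDeriv bq q * hasseDeriv bQ' Q) < ν (hasseDeriv i q * hasseDeriv j Q) := by
      by_cases hdq : q.natDegree = 0
      · refine ⟨0, bQ, by omega, by rw [hasseDeriv_zero']; exact hq0, hbQne, ?_, ?_⟩
        · rw [hasseDeriv_zero', hνmul q _ hq0 hbQne, hbQeq, hνqQ]
          push_cast; linarith
        · intro i j hij hne
          left
          have hi1 : 1 ≤ i := by
            rcases Nat.eq_zero_or_pos i with h0 | h1
            · exfalso; apply hne; subst h0; simp at hij ⊢; omega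
            · exact h1
          rw [hasseDeriv_zero_of_lt (by omega), zero_mul]
      · have hdq1 : 1 ≤ q.natDegree := by omega
        obtain ⟨bq, ⟨hbq1, hbqne, hbqeq⟩, hbqmax⟩ := eps_attain ν q hq0 hdq1
        rw [← hεqdef] at hbqeq
        have hboundq : ∀ i : ℕ, hasseDeriv i q ≠ 0 →
            ν q - i * εq ≤ ν (hasseDeriv i q) := by
          intro i hi
          rcases Nat.eq_zero_or_pos i with h0 | h1
          · subst h0; rw [hasseDeriv_zero']; push_cast; simp
          · exact le_eps_val ν q h1 hi
        have hstrictq : ∀ i : ℕ, bq < i → hasseDeriv i q ≠ 0 →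
            ν q - i * εq < ν (hasseDeriv i q) := by
          intro i hi hne
          rcases (hboundq i hne).lt_or_eq with h | h
          · exact h
          · exact absurd (hbqmax i (by omega) hne h.symm) (by omega)
        have hstrictQ : ∀ j : ℕ, bQ < j → hasseDeriv j Q ≠ 0 →
            ν Q - j * εQ < ν (hasseDeriv j Q) := by
          intro j hj hne
          rcases (hboundQ j hne).lt_or_eq with h | h
          · exact h
          · exact absurd (hbQmax j (by omega) hne h.symm) (by omega)
        rcases lt_trichotomy εq εQ with hlt | heqε | hgt
        · refine ⟨0, bQ, by omega, by rw [hasseDeriv_zero']; exact hq0, hbQne, ?_, ?_⟩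
          · rw [hasseDeriv_zero', hνmul q _ hq0 hbQne, hbQeq, hνqQ]
            push_cast; linarith
          · intro i j hij hne
            by_cases hzq : hasseDeriv i q = 0
            · left; rw [hzq, zero_mul]
            by_cases hzQ : hasseDeriv j Q = 0
            · left; rw [hzQ, mul_zero]
            right
            have hi1 : 1 ≤ i := by
              rcases Nat.eq_zero_or_pos i with h0 | h1
              · exfalso; apply hne; subst h0; simp at hij ⊢; omega
              · exact h1
            rw [hνmul _ _ hzq hzQ, hasseDeriv_zero', hνmul q _ hq0 hbQne, hbQeq]
            have h1 := hboundq i hzq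
            have h2 := hboundQ j hzQ
            have hijR : (i : ℝ) + (j : ℝ) = (bQ : ℝ) := by exact_mod_cast by omega
            have hi1R : (1 : ℝ) ≤ (i : ℝ) := by exact_mod_cast hi1
            have hmul : (i : ℝ) * εq < (i : ℝ) * εQ :=
              mul_lt_mul_of_pos_left hlt (by linarith)
            have hcomb : ((i : ℝ) + (j : ℝ)) * εQ = (bQ : ℝ) * εQ := by rw [hijR]
            nlinarith [hcomb]
        · refine ⟨bq, bQ, by omega, hbqne, hbQne, ?_, ?_⟩
          · rw [hνmul _ _ hbqne hbQne, hbqeq, hbQeq, hνqQ, heqε]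
            push_cast; linarith
          · intro i j hij hne
            by_cases hzq : hasseDeriv i q = 0
            · left; rw [hzq, zero_mul]
            by_cases hzQ : hasseDeriv j Q = 0
            · left; rw [hzQ, mul_zero]
            right
            rw [hνmul _ _ hzq hzQ, hνmul _ _ hbqne hbQne, hbqeq, hbQeq]
            have hcase : bq < i ∨ bQ < j := by
              by_contra hno
              push_neg at hno
              apply hne
              have : i = bq ∧ j = bQ := by omega
              rw [this.1, this.2]
            have hijR : (i : ℝ) + (j : ℝ) = (bq : ℝ) + (bQ : ℝ) := by exact_mod_cast hij
            have hcomb : ((i : ℝ) + (j : ℝ)) * εQ = ((bq : ℝ) + (bQ : ℝ)) * εQ := by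
              rw [hijR]
            rcases hcase with hc | hc
            · have h1 := hstrictq i hc hzq
              have h2 := hboundQ j hzQ
              rw [heqε] at h1 ⊢
              nlinarith [hcomb]
            · have h1 := hboundq i hzq
              have h2 := hstrictQ j hc hzQ
              rw [heqε] at h1 ⊢
              nlinarith [hcomb]
        · refine ⟨bq, 0, by omega, hbqne, by rw [hasseDeriv_zero']; exact hQ0, ?_, ?_⟩
          · rw [hνmul _ _ hbqne (by rw [hasseDeriv_zero']; exact hQ0), hbqeq,
              hasseDeriv_zero', hνqQ]
            have hbq0 : (0 : ℝ) ≤ (bq : ℝ) := by positivity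
            have hmul : (bq : ℝ) * εQ ≤ (bq : ℝ) * εq :=
              mul_le_mul_of_nonneg_left hgt.le hbq0
            push_cast; linarith
          · intro i j hij hne
            by_cases hzq : hasseDeriv i q = 0
            · left; rw [hzq, zero_mul]
            by_cases hzQ : hasseDeriv j Q = 0
            · left; rw [hzQ, mul_zero]
            right
            have hj1 : 1 ≤ j := by
              rcases Nat.eq_zero_or_pos j with h0 | h1
              · exfalso; apply hne; subst h0; simp at hij ⊢; omega
              · exact h1
            rw [hνmul _ _ hzq hzQ, hνmul _ _ hbqne (by rw [hasseDeriv_zero']; exact hQ0),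
              hbqeq, hasseDeriv_zero']
            have h1 := hboundq i hzq
            have h2 := hboundQ j hzQ
            have hijR : (i : ℝ) + (j : ℝ) = (bq : ℝ) := by exact_mod_cast by omega
            have hj1R : (1 : ℝ) ≤ (j : ℝ) := by exact_mod_cast hj1
            have hmul : (j : ℝ) * εQ < (j : ℝ) * εq :=
              mul_lt_mul_of_pos_left hgt (by linarith)
            have hcomb : ((i : ℝ) + (j : ℝ)) * εq = (bq : ℝ) * εq := by rw [hijR]
            nlinarith [hcomb]
    set b := bq + bQ' with hbdef
    have hprod : hasseDeriv b (q * Q) =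
        ∑ ij ∈ Finset.HasAntidiagonal.antidiagonal b, hasseDeriv ij.1 q * hasseDeriv ij.2 Q :=
      hasseDeriv_mul b q Q
    have hsum := val_sum_eq_aux ν hν (Finset.HasAntidiagonal.antidiagonal b)
        (fun ij : ℕ × ℕ => hasseDeriv ij.1 q * hasseDeriv ij.2 Q) (bq, bQ')
        (Finset.HasAntidiagonal.mem_antidiagonal.mpr rfl) (mul_ne_zero hq_ne hQ_ne)
        (by
          rintro ⟨i, j⟩ hij hneq
          exact hother i j (Finset.HasAntidiagonal.mem_antidiagonal.mp hij) hneq)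
    rw [← hprod] at hsum
    obtain ⟨hbqQne, hbqQval⟩ := hsum
    have hdf : hasseDeriv b f = hasseDeriv b r + hasseDeriv b (q * Q) := by
      rw [← hfeq, map_add]
    have hfinal : hasseDeriv b f ≠ 0 ∧
        ν (hasseDeriv b f) = ν (hasseDeriv bq q * hasseDeriv bQ' Q) := by
      by_cases hrz : hasseDeriv b r = 0
      · rw [hdf, hrz, zero_add]; exact ⟨hbqQne, hbqQval⟩
      · have hVr : ν (hasseDeriv b (q * Q)) < ν (hasseDeriv b r) := by
          have h1 := hrb b hbsum hrz
          rw [hbqQval]; linarith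
        have h2 := val_add_lt_aux ν hν hbqQne hrz hVr
        rw [hdf, add_comm]
        exact ⟨h2.1, by rw [h2.2, hbqQval]⟩
    obtain ⟨hdfne, hdfval⟩ := hfinal
    have h1 : (ν f - ν (hasseDeriv b f)) / b ≤ eps ν f := div_le_eps ν f hbsum hdfne
    have hb0 : (0 : ℝ) < (b : ℝ) := by exact_mod_cast hbsum
    rw [div_le_iff₀ hb0] at h1
    have h2 : εQ * (b : ℝ) ≤ ν f - ν (hasseDeriv b f) := by
      rw [hdfval]; nlinarith
    nlinarith [hεf, h1, h2]
  obtain ⟨hr0, hlt⟩ := key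
  obtain ⟨-, hνf⟩ := val_add_lt_aux ν hν hr0 hqQ0 hlt
  rw [hfeq] at hνf
  exact ⟨hr0, hνf, fun _ => hlt⟩
end

section
/- Let Q be a key polynomial for ν. For all nonzero f, g ∈ K[x], δ_Q(fg) = δ_Q(f) + δ_Q(g) and ν_Q(fg) = ν_Q(f) + ν_Q(g). In particular ν_Q is a valuation on K[x]. -/
open Polynomial

variable {K : Type*} [Field K]

namespace KeyAux

open Finset

variable {ν : Polynomial K → ℝ} {Q : Polynomial K}

lemma nu_one (hν : IsVal ν) : ν (1 : Polynomial K) = 0 := by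
  have h := hν.1 1 1 one_ne_zero one_ne_zero
  rw [mul_one] at h; linarith

lemma nu_neg (hν : IsVal ν) {f : Polynomial K} (hf : f ≠ 0) : ν (-f) = ν f := by
  have h1 := hν.1 (-1) (-1) (by norm_num) (by norm_num)
  rw [neg_one_mul, neg_neg] at h1
  have h2 := nu_one hν
  have h3 : ν (-1 : Polynomial K) = 0 := by linarith
  have h4 := hν.1 (-1) f (by norm_num) hf
  rw [neg_one_mul] at h4
  rw [h4, h3, zero_add]

lemma nu_pow (hν : IsVal ν) {Q : Polynomial K} (hQ : Q ≠ 0) (k : ℕ) :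
    ν (Q ^ k) = k * ν Q := by
  induction k with
  | zero => simpa using nu_one hν
  | succ n ih =>
    rw [pow_succ, hν.1 _ _ (pow_ne_zero _ hQ) hQ, ih]
    push_cast; ring

lemma nu_add_eq (hν : IsVal ν) {f g : Polynomial K} (hf : f ≠ 0) (hlt : ν f < ν g) :
    f + g ≠ 0 ∧ ν (f + g) = ν f := by
  by_cases hg : g = 0
  · subst hg; simpa using hf
  have hne : f + g ≠ 0 := by
    intro h
    have hgf : g = -f := by linear_combination h
    rw [hgf, nu_neg hν hf] at hlt; linarith
  refine ⟨hne, ?_⟩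
  have h1 : min (ν f) (ν g) ≤ ν (f + g) := hν.2 f g hf hg hne
  have h2 : min (ν (f + g)) (ν (-g)) ≤ ν (f + g + -g) :=
    hν.2 _ _ hne (neg_ne_zero.2 hg) (by simpa using hf)
  rw [add_neg_cancel_right, nu_neg hν hg] at h2
  rcases le_or_gt (ν (f + g)) (ν g) with h | h
  · rw [min_eq_left h] at h2
    rw [min_eq_left hlt.le] at h1
    linarith
  · rw [min_eq_right h.le] at h2; linarith

lemma nu_add_ge2 (hν : IsVal ν) {x y : Polynomial K} {c : ℝ} (hxy : x + y ≠ 0)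
    (hx : x ≠ 0 → c ≤ ν x) (hy : y ≠ 0 → c ≤ ν y) : c ≤ ν (x + y) := by
  by_cases h0 : x = 0
  · subst h0; rw [zero_add] at hxy ⊢; exact hy hxy
  by_cases h1 : y = 0
  · subst h1; rw [add_zero] at hxy ⊢; exact hx hxy
  exact le_trans (le_min (hx h0) (hy h1)) (hν.2 x y h0 h1 hxy)

lemma nu_add_gt2 (hν : IsVal ν) {x y : Polynomial K} {c : ℝ} (hxy : x + y ≠ 0)
    (hx : x ≠ 0 → c < ν x) (hy : y ≠ 0 → c < ν y) : c < ν (x + y) := by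
  by_cases h0 : x = 0
  · subst h0; rw [zero_add] at hxy ⊢; exact hy hxy
  by_cases h1 : y = 0
  · subst h1; rw [add_zero] at hxy ⊢; exact hx hxy
  exact lt_of_lt_of_le (lt_min (hx h0) (hy h1)) (hν.2 x y h0 h1 hxy)

lemma nu_sum_ge (hν : IsVal ν) {ι : Type*} {t : ι → Polynomial K} {c : ℝ} :
    ∀ (s : Finset ι), (∀ i ∈ s, t i ≠ 0 → c ≤ ν (t i)) → (∑ i ∈ s, t i ≠ 0) →
      c ≤ ν (∑ i ∈ s, t i) := by
  classical
  intro s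
  induction s using Finset.induction_on with
  | empty => intro _ hs; simp at hs
  | insert _ _ ha ih =>
    rename_i a s
    intro h hs
    rw [Finset.sum_insert ha] at hs ⊢
    exact nu_add_ge2 hν hs (fun h0 => h a (mem_insert_self a s) h0)
      (fun h1 => ih (fun i hi => h i (mem_insert_of_mem hi)) h1)

lemma nu_sum_gt (hν : IsVal ν) {ι : Type*} {t : ι → Polynomial K} {c : ℝ} :
    ∀ (s : Finset ι), (∀ i ∈ s, t i ≠ 0 → c < ν (t i)) → (∑ i ∈ s, t i ≠ 0) →
      c < ν (∑ i ∈ s, t i) := by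
  classical
  intro s
  induction s using Finset.induction_on with
  | empty => intro _ hs; simp at hs
  | insert _ _ ha ih =>
    rename_i a s
    intro h hs
    rw [Finset.sum_insert ha] at hs ⊢
    exact nu_add_gt2 hν hs (fun h0 => h a (mem_insert_self a s) h0)
      (fun h1 => ih (fun i hi => h i (mem_insert_of_mem hi)) h1)

lemma nu_sum_dom (hν : IsVal ν) {ι : Type*} [DecidableEq ι] {t : ι → Polynomial K}
    (s : Finset ι) (i0 : ι) (hi0 : i0 ∈ s) (h0 : t i0 ≠ 0)
    (hdom : ∀ i ∈ s, i ≠ i0 → t i ≠ 0 → ν (t i0) < ν (t i)) :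
    (∑ i ∈ s, t i) ≠ 0 ∧ ν (∑ i ∈ s, t i) = ν (t i0) := by
  rw [← Finset.add_sum_erase s t hi0]
  by_cases hrest : ∑ i ∈ s.erase i0, t i = 0
  · rw [hrest, add_zero]; exact ⟨h0, rfl⟩
  · have hgt : ν (t i0) < ν (∑ i ∈ s.erase i0, t i) :=
      nu_sum_gt hν _ (fun i hi hne =>
        hdom i (Finset.mem_of_mem_erase hi) (Finset.ne_of_mem_erase hi) hne) hrest
    exact nu_add_eq hν h0 hgt

lemma hasseDeriv_of_natDegree_lt (f : Polynomial K) {b : ℕ} (h : f.natDegree < b) :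
    hasseDeriv b f = 0 := by
  ext n
  rw [hasseDeriv_coeff, coeff_eq_zero_of_natDegree_lt (lt_of_lt_of_le h (Nat.le_add_left b n))]
  simp

lemma epsSet_finite (ν : Polynomial K → ℝ) (f : Polynomial K) :
    {r : ℝ | ∃ b : ℕ, 1 ≤ b ∧ hasseDeriv b f ≠ 0 ∧ r = (ν f - ν (hasseDeriv b f)) / b}.Finite := by
  apply Set.Finite.subset
    (Set.Finite.image (fun b : ℕ => (ν f - ν (hasseDeriv b f)) / b) (Set.finite_Icc 1 f.natDegree))
  rintro r ⟨b, hb, hd, rfl⟩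
  refine ⟨b, ⟨hb, ?_⟩, rfl⟩
  by_contra h
  exact hd (hasseDeriv_of_natDegree_lt f (by omega))

lemma eps_bound (ν : Polynomial K → ℝ) (f : Polynomial K) {b : ℕ} (hb : 1 ≤ b)
    (hd : hasseDeriv b f ≠ 0) : ν f - b * eps ν f ≤ ν (hasseDeriv b f) := by
  have hmem : (ν f - ν (hasseDeriv b f)) / b ∈
      {r : ℝ | ∃ b : ℕ, 1 ≤ b ∧ hasseDeriv b f ≠ 0 ∧ r = (ν f - ν (hasseDeriv b f)) / b} :=
    ⟨b, hb, hd, rfl⟩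
  have hle : (ν f - ν (hasseDeriv b f)) / b ≤ eps ν f :=
    le_csSup (epsSet_finite ν f).bddAbove hmem
  have hb' : (0 : ℝ) < b := by exact_mod_cast hb
  rw [div_le_iff₀ hb'] at hle
  nlinarith

lemma hasseDeriv_natDegree_ne_zero {f : Polynomial K} (hf : f ≠ 0) :
    hasseDeriv f.natDegree f ≠ 0 := by
  intro h
  have h0 := congrArg (fun p => Polynomial.coeff p 0) h
  simp only [hasseDeriv_coeff, Nat.zero_add, Nat.choose_self, Nat.cast_one, one_mul,
    coeff_zero] at h0
  exact hf (leadingCoeff_eq_zero.1 h0)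

lemma eps_attained (ν : Polynomial K → ℝ) {f : Polynomial K} (hf : 0 < f.natDegree) :
    ∃ b : ℕ, 1 ≤ b ∧ hasseDeriv b f ≠ 0 ∧ ν (hasseDeriv b f) = ν f - b * eps ν f := by
  have hf0 : f ≠ 0 := fun h => by simp [h] at hf
  have hne : {r : ℝ | ∃ b : ℕ, 1 ≤ b ∧ hasseDeriv b f ≠ 0 ∧
      r = (ν f - ν (hasseDeriv b f)) / b}.Nonempty :=
    ⟨_, f.natDegree, hf, hasseDeriv_natDegree_ne_zero hf0, rfl⟩
  obtain ⟨b, hb, hd, heq⟩ := hne.csSup_mem (epsSet_finite ν f)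
  refine ⟨b, hb, hd, ?_⟩
  have hb' : (0 : ℝ) < b := by exact_mod_cast hb
  have : eps ν f = (ν f - ν (hasseDeriv b f)) / b := heq
  rw [eq_div_iff hb'.ne'] at this
  nlinarith

lemma deriv_bound (ν : Polynomial K → ℝ) {f : Polynomial K} {E : ℝ} (hE : eps ν f < E)
    {k : ℕ} (hk : hasseDeriv k f ≠ 0) :
    (ν f - k * E ≤ ν (hasseDeriv k f)) ∧ (1 ≤ k → ν f - k * E < ν (hasseDeriv k f)) := by
  rcases Nat.eq_zero_or_pos k with rfl | hk1
  · simp only [hasseDeriv_zero, LinearMap.id_coe, id_eq, Nat.cast_zero, zero_mul, sub_zero]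
    exact ⟨le_refl _, by omega⟩
  · have h1 := eps_bound ν f hk1 hk
    have hkk : (0:ℝ) < k := by exact_mod_cast hk1
    have h2 : (k : ℝ) * eps ν f < k * E := by nlinarith
    exact ⟨by linarith, fun _ => by linarith⟩

/-- L2 : derivatives of a product of low-eps polynomials have high value. -/
lemma nu_hasseDeriv_mul_gt (hν : IsVal ν) {a b : Polynomial K} {E : ℝ}
    (ha : a ≠ 0) (hb : b ≠ 0) (hea : eps ν a < E) (heb : eps ν b < E)
    {c : ℕ} (hc : 1 ≤ c) (hd : hasseDeriv c (a * b) ≠ 0) :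
    ν a + ν b - c * E < ν (hasseDeriv c (a * b)) := by
  rw [hasseDeriv_mul] at hd ⊢
  apply nu_sum_gt hν _ ?_ hd
  rintro ⟨i, j⟩ hij hne
  have hij' : i + j = c := Finset.HasAntidiagonal.mem_antidiagonal.1 hij
  have hi : hasseDeriv i a ≠ 0 := fun h => hne (by simp [h])
  have hj : hasseDeriv j b ≠ 0 := fun h => hne (by simp [h])
  have hce : (c : ℝ) * E = i * E + j * E := by
    have : ((i + j : ℕ) : ℝ) = (i : ℝ) + j := by push_cast; ring
    rw [← hij']; rw [this]; ring
  rcases Nat.eq_zero_or_pos i with rfl | hi1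
  · have hj1 : 1 ≤ j := by omega
    have h1 := (deriv_bound ν heb hj).2 hj1
    have h0 : ν (hasseDeriv 0 a) = ν a := by
      simp only [hasseDeriv_zero, LinearMap.id_coe, id_eq]
    show ν a + ν b - c * E < ν (hasseDeriv 0 a * hasseDeriv j b)
    rw [hν.1 _ _ hi hj, h0]
    push_cast at hce
    linarith
  · have h1 := (deriv_bound ν hea hi).2 hi1
    have h2 := (deriv_bound ν heb hj).1
    show ν a + ν b - c * E < ν (hasseDeriv i a * hasseDeriv j b)
    rw [hν.1 _ _ hi hj]
    linarith

/-- L1 : dominant-term computation of `∂_{b0} (q * Q)`. -/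
lemma nu_hasseDeriv_qQ (hν : IsVal ν) {Q q : Polynomial K} (hq : q ≠ 0)
    {E : ℝ} (hqe : eps ν q < E)
    {b0 : ℕ} (hb0 : 1 ≤ b0) (hdQ : hasseDeriv b0 Q ≠ 0)
    (heq : ν (hasseDeriv b0 Q) = ν Q - b0 * E)
    (hbound : ∀ j : ℕ, 1 ≤ j → hasseDeriv j Q ≠ 0 → ν Q - j * E ≤ ν (hasseDeriv j Q)) :
    hasseDeriv b0 (q * Q) ≠ 0 ∧ ν (hasseDeriv b0 (q * Q)) = ν q + ν Q - b0 * E := by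
  rw [hasseDeriv_mul]
  have hmem : ((0 : ℕ), b0) ∈ antidiagonal b0 := Finset.HasAntidiagonal.mem_antidiagonal.2 (by omega)
  have ht0 : hasseDeriv (0:ℕ) q * hasseDeriv b0 Q ≠ 0 := by
    simp only [hasseDeriv_zero, LinearMap.id_coe, id_eq]
    exact mul_ne_zero hq hdQ
  have hval0 : ν (hasseDeriv (0:ℕ) q * hasseDeriv b0 Q) = ν q + ν Q - b0 * E := by
    simp only [hasseDeriv_zero, LinearMap.id_coe, id_eq]
    rw [hν.1 _ _ hq hdQ, heq]; ring
  have hdom : ∀ p ∈ antidiagonal b0, p ≠ ((0:ℕ), b0) →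
      hasseDeriv p.1 q * hasseDeriv p.2 Q ≠ 0 →
      ν (hasseDeriv (0:ℕ) q * hasseDeriv b0 Q) < ν (hasseDeriv p.1 q * hasseDeriv p.2 Q) := by
    rintro ⟨i, j⟩ hij hne h0
    have hij' : i + j = b0 := Finset.HasAntidiagonal.mem_antidiagonal.1 hij
    have hi : hasseDeriv i q ≠ 0 := fun h => h0 (by simp [h])
    have hj : hasseDeriv j Q ≠ 0 := fun h => h0 (by simp [h])
    have hi1 : 1 ≤ i := by
      by_contra h
      have : i = 0 := by omega
      subst this
      have : j = b0 := by omega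
      subst this
      exact hne rfl
    have hbe : (b0 : ℝ) * E = i * E + j * E := by
      have : ((i + j : ℕ) : ℝ) = (i : ℝ) + j := by push_cast; ring
      rw [← hij']; rw [this]; ring
    show _ < ν (hasseDeriv i q * hasseDeriv j Q)
    rw [hval0, hν.1 _ _ hi hj]
    have h1 := (deriv_bound ν hqe hi).2 hi1
    have h2 : ν Q - j * E ≤ ν (hasseDeriv j Q) := by
      rcases Nat.eq_zero_or_pos j with rfl | hj1
      · simp only [hasseDeriv_zero, LinearMap.id_coe, id_eq, Nat.cast_zero, zero_mul, sub_zero,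
          le_refl]
      · exact hbound j hj1 hj
    linarith
  have hres := nu_sum_dom hν (antidiagonal b0) ((0:ℕ), b0) hmem ht0 hdom
  exact ⟨hres.1, hres.2.trans hval0⟩

/-- The key lemma on products of polynomials of degree `< deg Q`. -/
lemma key_lemma (hν : IsVal ν) {Q : Polynomial K} (hQ : IsKeyPol ν Q)
    {a b : Polynomial K} (ha : a ≠ 0) (hb : b ≠ 0)
    (hda : a.natDegree < Q.natDegree) (hdb : b.natDegree < Q.natDegree) :
    (a * b) %ₘ Q ≠ 0 ∧ ν ((a * b) %ₘ Q) = ν a + ν b ∧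
      ((a * b) /ₘ Q ≠ 0 → ν a + ν b < ν ((a * b) /ₘ Q * Q)) := by
  obtain ⟨hQm, hdpos, hkey⟩ := hQ
  have hQne : Q ≠ 0 := hQm.ne_zero
  set E := eps ν Q with hE
  set r := (a * b) %ₘ Q with hr
  set q := (a * b) /ₘ Q with hq
  have hab : a * b ≠ 0 := mul_ne_zero ha hb
  have hsplit : r + Q * q = a * b := modByMonic_add_div (a * b) Q
  by_cases hq0 : q = 0
  · rw [hq0, mul_zero, add_zero] at hsplit
    rw [hsplit]
    exact ⟨hab, (hν.1 a b ha hb), fun h => absurd hq0 h⟩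
  -- q ≠ 0 case
  have hqQ : Q * q ≠ 0 := mul_ne_zero hQne hq0
  have hdq : q.natDegree < Q.natDegree := by
    have h1 : q.natDegree = (a * b).natDegree - Q.natDegree := natDegree_divByMonic (a*b) hQm
    have h2 : (a * b).natDegree = a.natDegree + b.natDegree := natDegree_mul ha hb
    omega
  have hqe : eps ν q < E := hkey q hq0 hdq
  have hae : eps ν a < E := hkey a ha hda
  have hbe : eps ν b < E := hkey b hb hdb
  obtain ⟨b0, hb0, hdQ, hvQ⟩ := eps_attained ν hdpos
  have hL1 := nu_hasseDeriv_qQ hν hq0 hqe hb0 hdQ hvQ (fun j hj hd => eps_bound ν Q hj hd)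
  have hvq : ν (Q * q) = ν Q + ν q := hν.1 Q q hQne hq0
  -- main claim
  have main : r ≠ 0 ∧ ν r < ν (Q * q) := by
    by_contra hcon
    have hcon' : r = 0 ∨ ν (Q * q) ≤ ν r := by
      by_cases hr0 : r = 0
      · exact Or.inl hr0
      · right
        by_contra hlt
        exact hcon ⟨hr0, by linarith [lt_of_not_ge hlt]⟩
    have hge : ν (Q * q) ≤ ν (a * b) := by
      rcases hcon' with hr0 | hle
      · rw [hr0, zero_add] at hsplit; rw [← hsplit]
      · by_cases hr0 : r = 0
        · rw [hr0, zero_add] at hsplit; rw [← hsplit]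
        · have hmin := hν.2 r (Q * q) hr0 hqQ (by rw [hsplit]; exact hab)
          rw [hsplit, min_eq_right hle] at hmin
          exact hmin
    -- compute ∂_{b0}(Q*q) two ways
    have hQq_ab : Q * q = a * b - r := by rw [← hsplit]; ring
    have hder : hasseDeriv b0 (Q * q) = hasseDeriv b0 (a * b) - hasseDeriv b0 r := by
      rw [hQq_ab, map_sub]
    have hL1' : hasseDeriv b0 (Q * q) ≠ 0 ∧
        ν (hasseDeriv b0 (Q * q)) = ν q + ν Q - b0 * E := by
      rw [mul_comm Q q]; exact hL1
    have ht1 : hasseDeriv b0 (a * b) ≠ 0 →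
        ν (Q * q) - b0 * E < ν (hasseDeriv b0 (a * b)) := by
      intro h
      have := nu_hasseDeriv_mul_gt hν ha hb hae hbe hb0 h
      have habv : ν (a * b) = ν a + ν b := hν.1 a b ha hb
      linarith
    have ht2 : hasseDeriv b0 r ≠ 0 → ν (Q * q) - b0 * E < ν (hasseDeriv b0 r) := by
      intro h
      have hr0 : r ≠ 0 := fun h0 => h (by rw [h0]; exact map_zero _)
      have hre : eps ν r < E := by
        apply hkey r hr0
        have := degree_modByMonic_lt (a * b) hQm
        rw [← hr] at this
        exact natDegree_lt_natDegree hr0 this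
      have hb1 := (deriv_bound ν hre h).2 hb0
      have hler : ν (Q * q) ≤ ν r := by
        rcases hcon' with hr0' | hle
        · exact absurd hr0' hr0
        · exact hle
      linarith
    have hfinal : ν (Q * q) - b0 * E < ν (hasseDeriv b0 (Q * q)) := by
      rw [hder]
      by_cases h1 : hasseDeriv b0 (a * b) = 0
      · by_cases h2 : hasseDeriv b0 r = 0
        · exfalso; apply hL1'.1; rw [hder, h1, h2, sub_zero]
        · rw [h1, zero_sub, nu_neg hν h2]
          exact ht2 h2
      · by_cases h2 : hasseDeriv b0 r = 0
        · rw [h2, sub_zero]; exact ht1 h1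
        · have hsub : hasseDeriv b0 (a * b) - hasseDeriv b0 r =
              hasseDeriv b0 (a * b) + -(hasseDeriv b0 r) := by ring
          rw [hsub]
          have hne : hasseDeriv b0 (a * b) + -(hasseDeriv b0 r) ≠ 0 := by
            rw [← hsub, ← hder]; exact hL1'.1
          have hmin := hν.2 _ _ h1 (neg_ne_zero.2 h2) hne
          rw [nu_neg hν h2] at hmin
          have := ht1 h1; have := ht2 h2
          calc ν (Q * q) - b0 * E < min (ν (hasseDeriv b0 (a * b))) (ν (hasseDeriv b0 r)) := by
                rcases le_total (ν (hasseDeriv b0 (a * b))) (ν (hasseDeriv b0 r)) with hc | hc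
                · rw [min_eq_left hc]; exact ht1 h1
                · rw [min_eq_right hc]; exact ht2 h2
            _ ≤ ν (hasseDeriv b0 (a * b) + -hasseDeriv b0 r) := hmin
    rw [hL1'.2, hvq] at hfinal
    linarith
  -- conclusion
  obtain ⟨hr0, hlt⟩ := main
  have hadd := nu_add_eq hν hr0 hlt
  rw [hsplit] at hadd
  have habv : ν (a * b) = ν a + ν b := hν.1 a b ha hb
  refine ⟨hr0, by rw [← hadd.2, habv], fun _ => ?_⟩
  show ν a + ν b < ν (q * Q)
  rw [mul_comm q Q]
  linarith [hadd.2, habv, hlt]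

lemma qc_zero_eq (Q f : Polynomial K) : qc Q f 0 = f %ₘ Q := rfl

lemma qc_succ_eq (Q f : Polynomial K) (i : ℕ) : qc Q f (i + 1) = qc Q (f /ₘ Q) i := rfl

lemma qc_of_zero (Q : Polynomial K) : ∀ i, qc Q 0 i = 0
  | 0 => by rw [qc_zero_eq, zero_modByMonic]
  | (i + 1) => by rw [qc_succ_eq, zero_divByMonic]; exact qc_of_zero Q i

lemma qc_exists_mod (Q : Polynomial K) : ∀ (i : ℕ) (f : Polynomial K), ∃ g, qc Q f i = g %ₘ Q
  | 0, f => ⟨f, rfl⟩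
  | (i + 1), f => qc_exists_mod Q i (f /ₘ Q)

lemma degree_qc_lt (hQm : Q.Monic) (f : Polynomial K) (i : ℕ) :
    (qc Q f i).degree < Q.degree := by
  obtain ⟨g, hg⟩ := qc_exists_mod Q i f
  rw [hg]; exact degree_modByMonic_lt g hQm

lemma natDegree_qc_lt (hQm : Q.Monic) {f : Polynomial K} {i : ℕ} (h : qc Q f i ≠ 0) :
    (qc Q f i).natDegree < Q.natDegree :=
  natDegree_lt_natDegree h (degree_qc_lt hQm f i)

lemma degree_lt_of_natDegree_lt {f g : Polynomial K} (hg : g ≠ 0) (h : f.natDegree < g.natDegree) :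
    f.degree < g.degree := by
  calc f.degree ≤ (f.natDegree : WithBot ℕ) := degree_le_natDegree
    _ < (g.natDegree : WithBot ℕ) := by exact_mod_cast h
    _ = g.degree := (degree_eq_natDegree hg).symm

lemma qc_eq_zero (hQm : Q.Monic) (hd : 0 < Q.natDegree) :
    ∀ (i : ℕ) (f : Polynomial K), f.natDegree < i → qc Q f i = 0 := by
  intro i
  induction i with
  | zero => intro f h; omega
  | succ i ih =>
    intro f hf
    rw [qc_succ_eq]
    by_cases h0 : f /ₘ Q = 0
    · rw [h0]; exact qc_of_zero Q i
    · apply ih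
      rw [natDegree_divByMonic f hQm]
      have hfne : f ≠ 0 := fun h => h0 (by rw [h, zero_divByMonic])
      have hge : ¬ f.degree < Q.degree := fun hlt => h0 ((divByMonic_eq_zero_iff hQm).2 hlt)
      have : Q.natDegree ≤ f.natDegree := by
        by_contra hcon
        exact hge (degree_lt_of_natDegree_lt hQm.ne_zero (by omega))
      omega

lemma qc_ne_zero_le (hQm : Q.Monic) (hd : 0 < Q.natDegree) {f : Polynomial K} {i : ℕ}
    (h : qc Q f i ≠ 0) : i ≤ f.natDegree := by
  by_contra hcon
  exact h (qc_eq_zero hQm hd i f (by omega))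

lemma qc_expansion (hQm : Q.Monic) (hd : 0 < Q.natDegree) :
    ∀ (n : ℕ) (f : Polynomial K), f.natDegree < n →
      f = ∑ i ∈ Finset.range n, qc Q f i * Q ^ i := by
  intro n
  induction n with
  | zero => intro f h; omega
  | succ n ih =>
    intro f hf
    rw [Finset.sum_range_succ']
    simp only [qc_succ_eq, pow_zero, mul_one, qc_zero_eq]
    by_cases h0 : f /ₘ Q = 0
    · have hz : ∀ i ∈ Finset.range n, qc Q (f /ₘ Q) i * Q ^ (i + 1) = 0 := fun i _ => by
        rw [h0, qc_of_zero, zero_mul]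
      rw [Finset.sum_eq_zero hz, zero_add]
      conv_lhs => rw [← modByMonic_add_div f Q]
      rw [h0, mul_zero, add_zero]
    · have hdeg : (f /ₘ Q).natDegree < n := by
        rw [natDegree_divByMonic f hQm]
        have hfne : f ≠ 0 := fun h => h0 (by rw [h, zero_divByMonic])
        have hge : ¬ f.degree < Q.degree := fun hlt => h0 ((divByMonic_eq_zero_iff hQm).2 hlt)
        have : Q.natDegree ≤ f.natDegree := by
          by_contra hcon
          exact hge (degree_lt_of_natDegree_lt hQm.ne_zero (by omega))
        omega
      have hQmul : Q * (f /ₘ Q) = ∑ i ∈ Finset.range n, qc Q (f /ₘ Q) i * Q ^ (i + 1) := by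
        conv_lhs => rw [ih (f /ₘ Q) hdeg]
        rw [Finset.mul_sum]
        exact Finset.sum_congr rfl (fun i _ => by ring)
      rw [← hQmul]
      conv_lhs => rw [← modByMonic_add_div f Q]
      ring

lemma add_divByMonic' (hQm : Q.Monic) (p q : Polynomial K) :
    (p + q) /ₘ Q = p /ₘ Q + q /ₘ Q := by
  refine (div_modByMonic_unique (p /ₘ Q + q /ₘ Q) (p %ₘ Q + q %ₘ Q) hQm ⟨?_, ?_⟩).1
  · have h1 := modByMonic_add_div p Q
    have h2 := modByMonic_add_div q Q
    ring_nf
    linear_combination h1 + h2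
  · exact lt_of_le_of_lt (degree_add_le _ _)
      (max_lt (degree_modByMonic_lt p hQm) (degree_modByMonic_lt q hQm))

lemma qc_add (hQm : Q.Monic) : ∀ (i : ℕ) (f g : Polynomial K),
    qc Q (f + g) i = qc Q f i + qc Q g i := by
  intro i
  induction i with
  | zero => intro f g; rw [qc_zero_eq, qc_zero_eq, qc_zero_eq, add_modByMonic]
  | succ i ih => intro f g; rw [qc_succ_eq, add_divByMonic' hQm, ih, qc_succ_eq, qc_succ_eq]

lemma qc_unique (hQm : Q.Monic) :
    ∀ (n : ℕ) (a : ℕ → Polynomial K) (f : Polynomial K),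
      (∀ i, (a i).degree < Q.degree) → f = ∑ i ∈ Finset.range n, a i * Q ^ i →
      (∀ i, i < n → qc Q f i = a i) ∧ (∀ i, n ≤ i → qc Q f i = 0) := by
  intro n
  induction n with
  | zero =>
    intro a f _ hf
    rw [Finset.range_zero, Finset.sum_empty] at hf
    subst hf
    exact ⟨fun i h => by omega, fun i _ => qc_of_zero Q i⟩
  | succ n ih =>
    intro a f hdeg hf
    have hsum : a 0 + Q * (∑ i ∈ Finset.range n, a (i + 1) * Q ^ i) = f := by
      rw [hf, Finset.sum_range_succ', pow_zero, mul_one, Finset.mul_sum, add_comm]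
      congr 1
      exact Finset.sum_congr rfl (fun i _ => by ring)
    obtain ⟨hdiv, hmod⟩ := div_modByMonic_unique _ _ hQm ⟨hsum, hdeg 0⟩
    have hih' := ih (fun i => a (i + 1)) (f /ₘ Q) (fun i => hdeg (i + 1)) hdiv
    constructor
    · intro i hi
      cases i with
      | zero => rw [qc_zero_eq]; exact hmod
      | succ i => rw [qc_succ_eq]; exact hih'.1 i (by omega)
    · intro i hi
      cases i with
      | zero => omega
      | succ i => rw [qc_succ_eq]; exact hih'.2 i (by omega)

lemma exists_qc_ne_zero (hQm : Q.Monic) (hd : 0 < Q.natDegree) {f : Polynomial K} (hf : f ≠ 0) :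
    ∃ i, qc Q f i ≠ 0 := by
  by_contra h
  push_neg at h
  apply hf
  rw [qc_expansion hQm hd (f.natDegree + 1) f (by omega)]
  exact Finset.sum_eq_zero (fun i _ => by rw [h i, zero_mul])

lemma nuQSet_finite (ν : Polynomial K → ℝ) (hQm : Q.Monic) (hd : 0 < Q.natDegree)
    (f : Polynomial K) :
    {r : ℝ | ∃ i : ℕ, qc Q f i ≠ 0 ∧ r = ν (qc Q f i * Q ^ i)}.Finite := by
  apply Set.Finite.subset
    (Set.Finite.image (fun i : ℕ => ν (qc Q f i * Q ^ i)) (Set.finite_Icc 0 f.natDegree))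
  rintro r ⟨i, hi, rfl⟩
  refine ⟨i, ⟨by omega, ?_⟩, rfl⟩
  by_contra h
  exact hi (qc_eq_zero hQm hd i f (by omega))

lemma nuQ_min (hQm : Q.Monic) (hd : 0 < Q.natDegree) {f : Polynomial K} (hf : f ≠ 0) :
    (∃ i, qc Q f i ≠ 0 ∧ ν (qc Q f i * Q ^ i) = nuQ ν Q f) ∧
      (∀ i, qc Q f i ≠ 0 → nuQ ν Q f ≤ ν (qc Q f i * Q ^ i)) := by
  have hne : {r : ℝ | ∃ i : ℕ, qc Q f i ≠ 0 ∧ r = ν (qc Q f i * Q ^ i)}.Nonempty := by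
    obtain ⟨i, hi⟩ := exists_qc_ne_zero hQm hd hf
    exact ⟨_, i, hi, rfl⟩
  constructor
  · obtain ⟨i, hi, heq⟩ := hne.csInf_mem (nuQSet_finite ν hQm hd f)
    exact ⟨i, hi, heq.symm⟩
  · intro i hi
    exact csInf_le (nuQSet_finite ν hQm hd f).bddBelow ⟨i, hi, rfl⟩

lemma deltaQ_spec (hQm : Q.Monic) (hd : 0 < Q.natDegree) {f : Polynomial K} (hf : f ≠ 0) :
    deltaQ ν Q f ∈ SQ ν Q f ∧ ∀ i ∈ SQ ν Q f, i ≤ deltaQ ν Q f := by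
  have hne : (SQ ν Q f).Nonempty := by
    obtain ⟨i, hi, heq⟩ := (nuQ_min hQm hd hf).1
    exact ⟨i, hi, heq⟩
  have hbdd : BddAbove (SQ ν Q f) := by
    refine ⟨f.natDegree, fun i hi => ?_⟩
    by_contra h
    exact hi.1 (qc_eq_zero hQm hd i f (by omega))
  exact ⟨Nat.sSup_mem hne hbdd, fun i hi => le_csSup hbdd hi⟩

lemma nuQ_strict (hQm : Q.Monic) (hd : 0 < Q.natDegree) {f : Polynomial K} (hf : f ≠ 0)
    {i : ℕ} (hi : qc Q f i ≠ 0) (hgt : deltaQ ν Q f < i) :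
    nuQ ν Q f < ν (qc Q f i * Q ^ i) := by
  have hle := ((nuQ_min (ν := ν) hQm hd hf).2) i hi
  rcases lt_or_eq_of_le hle with h | h
  · exact h
  · exfalso
    have : i ∈ SQ ν Q f := ⟨hi, h.symm⟩
    have := (deltaQ_spec hQm hd hf).2 i this
    omega

/-- The Cauchy convolution of the `Q`-expansions of `f` and `g`. -/
noncomputable def wfun (Q f g : Polynomial K) (k : ℕ) : Polynomial K :=
  ∑ p ∈ antidiagonal k, qc Q f p.1 * qc Q g p.2

/-- The `Q`-expansion coefficients of `f * g`. -/
noncomputable def Afun (Q f g : Polynomial K) (k : ℕ) : Polynomial K :=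
  wfun Q f g k %ₘ Q + (if k = 0 then 0 else wfun Q f g (k - 1) /ₘ Q)

lemma Afun_zero (Q f g : Polynomial K) : Afun Q f g 0 = wfun Q f g 0 %ₘ Q := by
  simp [Afun]

lemma Afun_succ (Q f g : Polynomial K) (k : ℕ) :
    Afun Q f g (k + 1) = wfun Q f g (k + 1) %ₘ Q + wfun Q f g k /ₘ Q := by
  simp [Afun]

lemma sum_modByMonic {ι : Type*} (s : Finset ι) (h : ι → Polynomial K) (Q : Polynomial K) :
    (∑ i ∈ s, h i) %ₘ Q = ∑ i ∈ s, h i %ₘ Q := by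
  classical
  induction s using Finset.induction_on with
  | empty => simp [zero_modByMonic]
  | insert _ _ ha ih =>
    rename_i a s
    rw [Finset.sum_insert ha, Finset.sum_insert ha, add_modByMonic, ih]

lemma sum_divByMonic {ι : Type*} (hQm : Q.Monic) (s : Finset ι) (h : ι → Polynomial K) :
    (∑ i ∈ s, h i) /ₘ Q = ∑ i ∈ s, h i /ₘ Q := by
  classical
  induction s using Finset.induction_on with
  | empty => simp [zero_divByMonic]
  | insert _ _ ha ih =>
    rename_i a s
    rw [Finset.sum_insert ha, Finset.sum_insert ha, add_divByMonic' hQm, ih]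

lemma coeff_mk (a : ℕ → Polynomial K) (n : ℕ) (hn : ∀ i, n ≤ i → a i = 0) (i : ℕ) :
    (∑ k ∈ Finset.range n, Polynomial.C (a k) * Polynomial.X ^ k).coeff i = a i := by
  rw [finset_sum_coeff]
  simp only [coeff_C_mul, coeff_X_pow, mul_ite, mul_one, mul_zero]
  rw [Finset.sum_ite_eq (Finset.range n) i a]
  by_cases h : i < n
  · simp [Finset.mem_range, h]
  · simp only [Finset.mem_range, h, if_false]
    exact (hn i (by omega)).symm

lemma fg_expansion (hQm : Q.Monic) (hd : 0 < Q.natDegree) {f g : Polynomial K}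
    (hf : f ≠ 0) (hg : g ≠ 0) :
    f * g = ∑ k ∈ Finset.range (f.natDegree + g.natDegree + 2), Afun Q f g k * Q ^ k ∧
      (∀ k, f.natDegree + g.natDegree + 1 ≤ k → wfun Q f g k = 0) := by
  set L := f.natDegree + g.natDegree + 1 with hL
  set PF : Polynomial (Polynomial K) :=
    ∑ k ∈ Finset.range (f.natDegree + 1), Polynomial.C (qc Q f k) * Polynomial.X ^ k with hPF
  set PG : Polynomial (Polynomial K) :=
    ∑ k ∈ Finset.range (g.natDegree + 1), Polynomial.C (qc Q g k) * Polynomial.X ^ k with hPG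
  have hPFc : ∀ i, PF.coeff i = qc Q f i :=
    coeff_mk (qc Q f) _ (fun i hi => qc_eq_zero hQm hd i f (by omega))
  have hPGc : ∀ i, PG.coeff i = qc Q g i :=
    coeff_mk (qc Q g) _ (fun i hi => qc_eq_zero hQm hd i g (by omega))
  have hPFd : PF.natDegree ≤ f.natDegree := natDegree_le_iff_coeff_eq_zero.2 (fun N hN => by
    rw [hPFc]; exact qc_eq_zero hQm hd N f hN)
  have hPGd : PG.natDegree ≤ g.natDegree := natDegree_le_iff_coeff_eq_zero.2 (fun N hN => by
    rw [hPGc]; exact qc_eq_zero hQm hd N g hN)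
  have hmulnd : (PF * PG).natDegree < L := lt_of_le_of_lt natDegree_mul_le (by omega)
  have hwc : ∀ k, (PF * PG).coeff k = wfun Q f g k := by
    intro k
    rw [coeff_mul, wfun]
    exact Finset.sum_congr rfl (fun p _ => by rw [hPFc, hPGc])
  have hw0 : ∀ k, L ≤ k → wfun Q f g k = 0 := by
    intro k hk
    rw [← hwc k]
    exact coeff_eq_zero_of_natDegree_lt (by omega)
  have hevalF : Polynomial.eval Q PF = f := by
    rw [hPF, Polynomial.eval_finset_sum]
    simp only [eval_mul, eval_C, eval_pow, eval_X]
    exact (qc_expansion hQm hd (f.natDegree + 1) f (by omega)).symm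
  have hevalG : Polynomial.eval Q PG = g := by
    rw [hPG, Polynomial.eval_finset_sum]
    simp only [eval_mul, eval_C, eval_pow, eval_X]
    exact (qc_expansion hQm hd (g.natDegree + 1) g (by omega)).symm
  have hfgsum : f * g = ∑ k ∈ Finset.range L, wfun Q f g k * Q ^ k := by
    calc f * g = Polynomial.eval Q (PF * PG) := by rw [eval_mul, hevalF, hevalG]
      _ = ∑ k ∈ Finset.range L, (PF * PG).coeff k * Q ^ k := eval_eq_sum_range' hmulnd Q
      _ = ∑ k ∈ Finset.range L, wfun Q f g k * Q ^ k :=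
        Finset.sum_congr rfl (fun k _ => by rw [hwc])
  refine ⟨?_, hw0⟩
  have hstep : ∑ k ∈ Finset.range (L + 1), Afun Q f g k * Q ^ k
      = ∑ k ∈ Finset.range (L + 1), (wfun Q f g k %ₘ Q) * Q ^ k
        + ∑ k ∈ Finset.range (L + 1), (if k = 0 then 0 else wfun Q f g (k - 1) /ₘ Q) * Q ^ k := by
    rw [← Finset.sum_add_distrib]
    exact Finset.sum_congr rfl (fun k _ => by rw [Afun]; ring)
  have h2 : ∑ k ∈ Finset.range (L + 1), (if k = 0 then 0 else wfun Q f g (k - 1) /ₘ Q) * Q ^ k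
      = ∑ k ∈ Finset.range L, (wfun Q f g k /ₘ Q) * Q ^ (k + 1) := by
    rw [Finset.sum_range_succ']
    simp [Nat.succ_ne_zero]
  have h1 : ∑ k ∈ Finset.range (L + 1), (wfun Q f g k %ₘ Q) * Q ^ k
      = ∑ k ∈ Finset.range L, (wfun Q f g k %ₘ Q) * Q ^ k := by
    rw [Finset.sum_range_succ, hw0 L (le_refl L), zero_modByMonic, zero_mul, add_zero]
  have : f.natDegree + g.natDegree + 2 = L + 1 := by omega
  rw [this, hstep, h1, h2, hfgsum, ← Finset.sum_add_distrib]
  refine Finset.sum_congr rfl (fun k _ => ?_)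
  conv_lhs => rw [← modByMonic_add_div (wfun Q f g k) Q]
  ring

lemma degree_Afun_lt (hQm : Q.Monic) (hd : 0 < Q.natDegree) (f g : Polynomial K) (k : ℕ) :
    (Afun Q f g k).degree < Q.degree := by
  have hQne : Q ≠ 0 := hQm.ne_zero
  have hbot : (⊥ : WithBot ℕ) < Q.degree := by
    rw [bot_lt_iff_ne_bot]
    simp [degree_eq_bot, hQne]
  have hwdeg : ∀ j, (wfun Q f g j).natDegree ≤ Q.natDegree - 1 + (Q.natDegree - 1) := by
    intro j
    apply natDegree_sum_le_of_forall_le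
    rintro p _
    refine le_trans natDegree_mul_le (add_le_add ?_ ?_)
    · by_cases h : qc Q f p.1 = 0
      · rw [h, natDegree_zero]; omega
      · have := natDegree_qc_lt hQm h; omega
    · by_cases h : qc Q g p.2 = 0
      · rw [h, natDegree_zero]; omega
      · have := natDegree_qc_lt hQm h; omega
  apply lt_of_le_of_lt (degree_add_le _ _)
  apply max_lt (degree_modByMonic_lt _ hQm)
  by_cases hk : k = 0
  · rw [if_pos hk, degree_zero]; exact hbot
  · rw [if_neg hk]
    by_cases h0 : wfun Q f g (k - 1) /ₘ Q = 0
    · rw [h0, degree_zero]; exact hbot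
    · apply degree_lt_of_natDegree_lt hQne
      rw [natDegree_divByMonic _ hQm]
      have := hwdeg (k - 1)
      omega

lemma qc_mul_eq (hQm : Q.Monic) (hd : 0 < Q.natDegree) {f g : Polynomial K}
    (hf : f ≠ 0) (hg : g ≠ 0) :
    (∀ k, k < f.natDegree + g.natDegree + 2 → qc Q (f * g) k = Afun Q f g k) ∧
      (∀ k, f.natDegree + g.natDegree + 2 ≤ k → qc Q (f * g) k = 0) :=
  qc_unique hQm _ (Afun Q f g) (f * g) (fun i => degree_Afun_lt hQm hd f g i)
    (fg_expansion hQm hd hf hg).1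

/-- Valuation estimates for the coefficients of the `Q`-expansion of `f * g`. -/
lemma Afun_val (hν : IsVal ν) (hQ : IsKeyPol ν Q) {f g : Polynomial K}
    (hf : f ≠ 0) (hg : g ≠ 0) :
    (∀ k, Afun Q f g k * Q ^ k ≠ 0 →
        nuQ ν Q f + nuQ ν Q g ≤ ν (Afun Q f g k * Q ^ k) ∧
          (deltaQ ν Q f + deltaQ ν Q g < k →
            nuQ ν Q f + nuQ ν Q g < ν (Afun Q f g k * Q ^ k))) ∧
      (Afun Q f g (deltaQ ν Q f + deltaQ ν Q g) * Q ^ (deltaQ ν Q f + deltaQ ν Q g) ≠ 0 ∧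
        ν (Afun Q f g (deltaQ ν Q f + deltaQ ν Q g) * Q ^ (deltaQ ν Q f + deltaQ ν Q g))
          = nuQ ν Q f + nuQ ν Q g) := by
  have hQ' := hQ
  obtain ⟨hQm, hdpos, hkey⟩ := hQ
  have hQne : Q ≠ 0 := hQm.ne_zero
  have hνx : ∀ (x : Polynomial K) (k : ℕ), x ≠ 0 → ν (x * Q ^ k) = ν x + k * ν Q := by
    intro x k hx
    rw [hν.1 x (Q ^ k) hx (pow_ne_zero _ hQne), nu_pow hν hQne]
  -- value identity for "c"-terms
  have hcb : ∀ (k i j : ℕ), i + j = k → qc Q f i ≠ 0 → qc Q g j ≠ 0 →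
      (qc Q f i * qc Q g j) %ₘ Q * Q ^ k ≠ 0 ∧
      ν ((qc Q f i * qc Q g j) %ₘ Q * Q ^ k)
        = ν (qc Q f i * Q ^ i) + ν (qc Q g j * Q ^ j) := by
    intro k i j hij hfi hgj
    have kl := key_lemma hν hQ' hfi hgj (natDegree_qc_lt hQm hfi) (natDegree_qc_lt hQm hgj)
    refine ⟨mul_ne_zero kl.1 (pow_ne_zero _ hQne), ?_⟩
    rw [hνx _ k kl.1, kl.2.1, hνx _ i hfi, hνx _ j hgj]
    have hk : (k : ℝ) = (i : ℝ) + j := by exact_mod_cast hij.symm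
    rw [hk]; ring
  -- strict bound for "e"-terms
  have heb : ∀ (k i j : ℕ), i + j + 1 = k → qc Q f i ≠ 0 → qc Q g j ≠ 0 →
      (qc Q f i * qc Q g j) /ₘ Q ≠ 0 →
      ν (qc Q f i * Q ^ i) + ν (qc Q g j * Q ^ j)
        < ν ((qc Q f i * qc Q g j) /ₘ Q * Q ^ k) := by
    intro k i j hij hfi hgj hq0
    have kl := key_lemma hν hQ' hfi hgj (natDegree_qc_lt hQm hfi) (natDegree_qc_lt hQm hgj)
    have hstrict := kl.2.2 hq0
    rw [hν.1 _ Q hq0 hQne] at hstrict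
    rw [hνx _ k hq0, hνx _ i hfi, hνx _ j hgj]
    have hk : (k : ℝ) = (i : ℝ) + j + 1 := by exact_mod_cast hij.symm
    rw [hk]
    have hexp : ((i : ℝ) + j + 1) * ν Q = i * ν Q + j * ν Q + ν Q := by ring
    linarith [hexp]
  -- nonzero coefficients from nonzero terms
  have hcc : ∀ (i j k : ℕ), (qc Q f i * qc Q g j) %ₘ Q * Q ^ k ≠ 0 →
      qc Q f i ≠ 0 ∧ qc Q g j ≠ 0 := by
    intro i j k h
    constructor <;> intro h0 <;> exact h (by simp [h0])
  have hee : ∀ (i j k : ℕ), (qc Q f i * qc Q g j) /ₘ Q * Q ^ k ≠ 0 →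
      (qc Q f i ≠ 0 ∧ qc Q g j ≠ 0) ∧ (qc Q f i * qc Q g j) /ₘ Q ≠ 0 := by
    intro i j k h
    refine ⟨⟨fun h0 => h (by simp [h0]), fun h0 => h (by simp [h0])⟩, fun h0 => h (by rw [h0, zero_mul])⟩
  have hFmin := nuQ_min (ν := ν) hQm hdpos hf
  have hGmin := nuQ_min (ν := ν) hQm hdpos hg
  have hFdel := deltaQ_spec (ν := ν) hQm hdpos hf
  have hGdel := deltaQ_spec (ν := ν) hQm hdpos hg
  -- per-term lower bounds
  have hctermge : ∀ (k : ℕ), ∀ p ∈ antidiagonal k,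
      (qc Q f p.1 * qc Q g p.2) %ₘ Q * Q ^ k ≠ 0 →
      nuQ ν Q f + nuQ ν Q g ≤ ν ((qc Q f p.1 * qc Q g p.2) %ₘ Q * Q ^ k) := by
    rintro k ⟨i, j⟩ hp hne
    obtain ⟨hfi, hgj⟩ := hcc i j k hne
    rw [(hcb k i j (mem_antidiagonal.1 hp) hfi hgj).2]
    exact add_le_add (hFmin.2 i hfi) (hGmin.2 j hgj)
  have hctermgt : ∀ (k : ℕ), deltaQ ν Q f + deltaQ ν Q g < k → ∀ p ∈ antidiagonal k,
      (qc Q f p.1 * qc Q g p.2) %ₘ Q * Q ^ k ≠ 0 →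
      nuQ ν Q f + nuQ ν Q g < ν ((qc Q f p.1 * qc Q g p.2) %ₘ Q * Q ^ k) := by
    rintro k hk ⟨i, j⟩ hp hne
    obtain ⟨hfi, hgj⟩ := hcc i j k hne
    have hij := mem_antidiagonal.1 hp
    rw [(hcb k i j hij hfi hgj).2]
    rcases (by omega : deltaQ ν Q f < i ∨ deltaQ ν Q g < j) with h | h
    · exact add_lt_add_of_lt_of_le (nuQ_strict hQm hdpos hf hfi h) (hGmin.2 j hgj)
    · exact add_lt_add_of_le_of_lt (hFmin.2 i hfi) (nuQ_strict hQm hdpos hg hgj h)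
  have hetermgt : ∀ (k : ℕ), ∀ p ∈ antidiagonal k,
      (qc Q f p.1 * qc Q g p.2) /ₘ Q * Q ^ (k + 1) ≠ 0 →
      nuQ ν Q f + nuQ ν Q g < ν ((qc Q f p.1 * qc Q g p.2) /ₘ Q * Q ^ (k + 1)) := by
    rintro k ⟨i, j⟩ hp hne
    obtain ⟨⟨hfi, hgj⟩, hq0⟩ := hee i j (k + 1) hne
    have hij := mem_antidiagonal.1 hp
    calc nuQ ν Q f + nuQ ν Q g ≤ ν (qc Q f i * Q ^ i) + ν (qc Q g j * Q ^ j) :=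
          add_le_add (hFmin.2 i hfi) (hGmin.2 j hgj)
      _ < _ := heb (k + 1) i j (by omega) hfi hgj hq0
  -- sums rewriting
  have hT1 : ∀ k, wfun Q f g k %ₘ Q * Q ^ k
      = ∑ p ∈ antidiagonal k, (qc Q f p.1 * qc Q g p.2) %ₘ Q * Q ^ k := by
    intro k
    rw [wfun, sum_modByMonic, Finset.sum_mul]
  have hT2 : ∀ k, wfun Q f g k /ₘ Q * Q ^ (k + 1)
      = ∑ p ∈ antidiagonal k, (qc Q f p.1 * qc Q g p.2) /ₘ Q * Q ^ (k + 1) := by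
    intro k
    rw [wfun, sum_divByMonic hQm, Finset.sum_mul]
  constructor
  · -- lower bounds for all k
    intro k hk
    cases k with
    | zero =>
      rw [Afun_zero] at hk ⊢
      rw [hT1 0] at hk ⊢
      exact ⟨nu_sum_ge hν _ (hctermge 0) hk, by omega⟩
    | succ k' =>
      rw [Afun_succ, add_mul] at hk ⊢
      constructor
      · apply nu_add_ge2 hν hk
        · intro hx; rw [hT1] at hx ⊢; exact nu_sum_ge hν _ (hctermge _) hx
        · intro hy; rw [hT2] at hy ⊢
          exact nu_sum_ge hν _ (fun p hp hne => le_of_lt (hetermgt k' p hp hne)) hy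
      · intro hklt
        apply nu_add_gt2 hν hk
        · intro hx; rw [hT1] at hx ⊢; exact nu_sum_gt hν _ (hctermgt _ hklt) hx
        · intro hy; rw [hT2] at hy ⊢
          exact nu_sum_gt hν _ (fun p hp hne => hetermgt k' p hp hne) hy
  · -- dominant coefficient at k0 = δf + δg
    have T1fact : ∀ k, k = deltaQ ν Q f + deltaQ ν Q g →
        (∑ p ∈ antidiagonal k, (qc Q f p.1 * qc Q g p.2) %ₘ Q * Q ^ k) ≠ 0 ∧
          ν (∑ p ∈ antidiagonal k, (qc Q f p.1 * qc Q g p.2) %ₘ Q * Q ^ k)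
            = nuQ ν Q f + nuQ ν Q g := by
      intro k hk
      have hd1 : qc Q f (deltaQ ν Q f) ≠ 0 := hFdel.1.1
      have hd2 : qc Q g (deltaQ ν Q g) ≠ 0 := hGdel.1.1
      have hmem : (deltaQ ν Q f, deltaQ ν Q g) ∈ antidiagonal k :=
        mem_antidiagonal.2 hk.symm
      have ht0 := hcb k (deltaQ ν Q f) (deltaQ ν Q g) hk.symm hd1 hd2
      have ht0val : ν ((qc Q f (deltaQ ν Q f) * qc Q g (deltaQ ν Q g)) %ₘ Q * Q ^ k)
          = nuQ ν Q f + nuQ ν Q g := by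
        rw [ht0.2, hFdel.1.2, hGdel.1.2]
      have hdom : ∀ p ∈ antidiagonal k, p ≠ (deltaQ ν Q f, deltaQ ν Q g) →
          (qc Q f p.1 * qc Q g p.2) %ₘ Q * Q ^ k ≠ 0 →
          ν ((qc Q f (deltaQ ν Q f) * qc Q g (deltaQ ν Q g)) %ₘ Q * Q ^ k)
            < ν ((qc Q f p.1 * qc Q g p.2) %ₘ Q * Q ^ k) := by
        rintro ⟨i, j⟩ hp hne h0
        obtain ⟨hfi, hgj⟩ := hcc i j k h0
        have hij := mem_antidiagonal.1 hp
        rw [ht0val, (hcb k i j hij hfi hgj).2]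
        by_contra hcon
        push_neg at hcon
        have h1 : nuQ ν Q f ≤ ν (qc Q f i * Q ^ i) := hFmin.2 i hfi
        have h2 : nuQ ν Q g ≤ ν (qc Q g j * Q ^ j) := hGmin.2 j hgj
        have he1 : ν (qc Q f i * Q ^ i) = nuQ ν Q f := by linarith
        have he2 : ν (qc Q g j * Q ^ j) = nuQ ν Q g := by linarith
        have hi : i ≤ deltaQ ν Q f := hFdel.2 i ⟨hfi, he1⟩
        have hj : j ≤ deltaQ ν Q g := hGdel.2 j ⟨hgj, he2⟩
        have hieq : i = deltaQ ν Q f := by omega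
        have hjeq : j = deltaQ ν Q g := by omega
        exact hne (by rw [hieq, hjeq])
      have hres := nu_sum_dom hν (antidiagonal k) (deltaQ ν Q f, deltaQ ν Q g) hmem ht0.1 hdom
      exact ⟨hres.1, hres.2.trans ht0val⟩
    rcases Nat.eq_zero_or_pos (deltaQ ν Q f + deltaQ ν Q g) with hz | hpos
    · rw [hz, Afun_zero, hT1 0]
      exact T1fact 0 hz.symm
    · obtain ⟨k', hk'⟩ : ∃ k', deltaQ ν Q f + deltaQ ν Q g = k' + 1 :=
        ⟨deltaQ ν Q f + deltaQ ν Q g - 1, by omega⟩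
      rw [hk', Afun_succ, add_mul, hT1 (k' + 1), hT2 k']
      have hX := T1fact (k' + 1) hk'.symm
      by_cases hY : (∑ p ∈ antidiagonal k', (qc Q f p.1 * qc Q g p.2) /ₘ Q * Q ^ (k' + 1)) = 0
      · rw [hY, add_zero]
        exact hX
      · have hYgt : nuQ ν Q f + nuQ ν Q g
            < ν (∑ p ∈ antidiagonal k', (qc Q f p.1 * qc Q g p.2) /ₘ Q * Q ^ (k' + 1)) :=
          nu_sum_gt hν _ (fun p hp hne => hetermgt k' p hp hne) hY
        have hlt : ν (∑ p ∈ antidiagonal (k' + 1), (qc Q f p.1 * qc Q g p.2) %ₘ Q * Q ^ (k' + 1))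
            < ν (∑ p ∈ antidiagonal k', (qc Q f p.1 * qc Q g p.2) /ₘ Q * Q ^ (k' + 1)) := by
          rw [hX.2]; exact hYgt
        have hres := nu_add_eq hν hX.1 hlt
        exact ⟨hres.1, hres.2.trans hX.2⟩

/-- Multiplicativity of `deltaQ` and `nuQ`. -/
lemma mul_spec (hν : IsVal ν) (hQ : IsKeyPol ν Q) {f g : Polynomial K}
    (hf : f ≠ 0) (hg : g ≠ 0) :
    deltaQ ν Q (f * g) = deltaQ ν Q f + deltaQ ν Q g ∧
      nuQ ν Q (f * g) = nuQ ν Q f + nuQ ν Q g := by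
  have hQm := hQ.1
  have hdpos := hQ.2.1
  have hQne : Q ≠ 0 := hQm.ne_zero
  have hval := Afun_val hν hQ hf hg
  have huniq := qc_mul_eq hQm hdpos hf hg
  have hFdel := deltaQ_spec (ν := ν) hQm hdpos hf
  have hGdel := deltaQ_spec (ν := ν) hQm hdpos hg
  have hdfle : deltaQ ν Q f ≤ f.natDegree := qc_ne_zero_le hQm hdpos hFdel.1.1
  have hdgle : deltaQ ν Q g ≤ g.natDegree := qc_ne_zero_le hQm hdpos hGdel.1.1
  have hk0lt : deltaQ ν Q f + deltaQ ν Q g < f.natDegree + g.natDegree + 2 := by omega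
  have hqck0 : qc Q (f * g) (deltaQ ν Q f + deltaQ ν Q g)
      = Afun Q f g (deltaQ ν Q f + deltaQ ν Q g) := huniq.1 _ hk0lt
  have hA0ne : qc Q (f * g) (deltaQ ν Q f + deltaQ ν Q g) ≠ 0 := by
    rw [hqck0]
    intro h
    exact hval.2.1 (by rw [h, zero_mul])
  -- every nonzero coefficient has value ≥ μ, with equality possible only for k ≤ k0
  have hbound : ∀ i, qc Q (f * g) i ≠ 0 →
      nuQ ν Q f + nuQ ν Q g ≤ ν (qc Q (f * g) i * Q ^ i) ∧
        (deltaQ ν Q f + deltaQ ν Q g < i →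
          nuQ ν Q f + nuQ ν Q g < ν (qc Q (f * g) i * Q ^ i)) := by
    intro i hi
    have hiL : i < f.natDegree + g.natDegree + 2 := by
      by_contra h
      exact hi (huniq.2 i (by omega))
    rw [huniq.1 i hiL] at hi ⊢
    exact hval.1 i (mul_ne_zero hi (pow_ne_zero _ hQne))
  -- nuQ (f*g) = nuQ f + nuQ g
  have hnuQfg : nuQ ν Q (f * g) = nuQ ν Q f + nuQ ν Q g := by
    have hlb : ∀ r ∈ {r : ℝ | ∃ i : ℕ, qc Q (f * g) i ≠ 0 ∧ r = ν (qc Q (f * g) i * Q ^ i)},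
        nuQ ν Q f + nuQ ν Q g ≤ r := by
      rintro r ⟨i, hi, rfl⟩
      exact (hbound i hi).1
    have hmem : nuQ ν Q f + nuQ ν Q g ∈
        {r : ℝ | ∃ i : ℕ, qc Q (f * g) i ≠ 0 ∧ r = ν (qc Q (f * g) i * Q ^ i)} := by
      refine ⟨deltaQ ν Q f + deltaQ ν Q g, hA0ne, ?_⟩
      rw [hqck0, hval.2.2]
    exact le_antisymm (csInf_le ⟨_, hlb⟩ hmem) (le_csInf ⟨_, hmem⟩ hlb)
  refine ⟨?_, hnuQfg⟩
  -- deltaQ (f*g) = deltaQ f + deltaQ g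
  have hmemS : deltaQ ν Q f + deltaQ ν Q g ∈ SQ ν Q (f * g) := by
    refine ⟨hA0ne, ?_⟩
    rw [hqck0, hval.2.2, hnuQfg]
  have hub : ∀ i ∈ SQ ν Q (f * g), i ≤ deltaQ ν Q f + deltaQ ν Q g := by
    rintro i ⟨hi, hvi⟩
    by_contra hcon
    have := (hbound i hi).2 (by omega)
    rw [hvi, hnuQfg] at this
    linarith
  exact le_antisymm (csSup_le ⟨_, hmemS⟩ hub) (le_csSup ⟨_, hub⟩ hmemS)

end KeyAux

/-- `δ_Q` and `ν_Q` are additive on products; in particular `ν_Q` is a valuation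
on `K[x]`. -/
theorem deltaQ_nuQ_mul (ν : Polynomial K → ℝ) (hν : IsVal ν)
    (Q : Polynomial K) (hQ : IsKeyPol ν Q) :
    (∀ f g : Polynomial K, f ≠ 0 → g ≠ 0 →
      deltaQ ν Q (f * g) = deltaQ ν Q f + deltaQ ν Q g ∧
        nuQ ν Q (f * g) = nuQ ν Q f + nuQ ν Q g) ∧
      IsVal (nuQ ν Q) := by
  have hQm := hQ.1
  have hdpos := hQ.2.1
  have hQne : Q ≠ 0 := hQm.ne_zero
  refine ⟨fun f g hf hg => KeyAux.mul_spec hν hQ hf hg, ?_, ?_⟩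
  · intro f g hf hg
    exact (KeyAux.mul_spec hν hQ hf hg).2
  · intro f g hf hg hfg
    have hne : {r : ℝ | ∃ i : ℕ, qc Q (f + g) i ≠ 0 ∧ r = ν (qc Q (f + g) i * Q ^ i)}.Nonempty := by
      obtain ⟨i, hi, _⟩ := (KeyAux.nuQ_min (ν := ν) hQm hdpos hfg).1
      exact ⟨_, i, hi, rfl⟩
    have hlb : ∀ r ∈ {r : ℝ | ∃ i : ℕ, qc Q (f + g) i ≠ 0 ∧ r = ν (qc Q (f + g) i * Q ^ i)},
        min (nuQ ν Q f) (nuQ ν Q g) ≤ r := by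
      rintro r ⟨i, hi, rfl⟩
      rw [KeyAux.qc_add hQm i f g] at hi ⊢
      rw [add_mul]
      apply KeyAux.nu_add_ge2 hν
      · rw [← add_mul]
        exact mul_ne_zero hi (pow_ne_zero _ hQne)
      · intro hx
        have hx' : qc Q f i ≠ 0 := fun h => hx (by rw [h, zero_mul])
        exact le_trans (min_le_left _ _) ((KeyAux.nuQ_min (ν := ν) hQm hdpos hf).2 i hx')
      · intro hy
        have hy' : qc Q g i ≠ 0 := fun h => hy (by rw [h, zero_mul])
        exact le_trans (min_le_right _ _) ((KeyAux.nuQ_min (ν := ν) hQm hdpos hg).2 i hy')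
    exact le_csInf hne hlb
end

section
/- Let Q₁, Q₂ be key polynomials for ν of the same degree with ν(Q₁) ≤ ν(Q₂), and write Q₂ = Q₁ + h with deg(h) < deg(Q₁). Then for every b in I(Q₁) (i.e. b with ν(∂_b Q₁) = ν(Q₁) - b·ε(Q₁)), we have ν(∂_b Q₂) = ν(∂_b Q₁). -/
open Polynomial

variable {K : Type*} [Field K]

lemma isval_one (ν : Polynomial K → ℝ) (hν : IsVal ν) : ν 1 = 0 := by
  have := hν.1 1 1 one_ne_zero one_ne_zero
  simp only [mul_one] at this
  linarith

lemma isval_neg (ν : Polynomial K → ℝ) (hν : IsVal ν) (g : Polynomial K) (hg : g ≠ 0) :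
    ν (-g) = ν g := by
  have h2 : ν ((-1 : Polynomial K) * (-1)) = ν (-1) + ν (-1) :=
    hν.1 _ _ (by simp) (by simp)
  rw [neg_mul_neg, one_mul, isval_one ν hν] at h2
  have h1 : ν ((-1 : Polynomial K) * g) = ν (-1) + ν g := hν.1 _ _ (by simp) hg
  rw [neg_one_mul] at h1
  linarith

lemma isval_add_eq (ν : Polynomial K → ℝ) (hν : IsVal ν) (f g : Polynomial K)
    (hf : f ≠ 0) (hg : g ≠ 0) (hlt : ν f < ν g) : ν (f + g) = ν f := by
  have hfg : f + g ≠ 0 := by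
    intro h0
    have : g = -f := by linear_combination h0
    rw [this, isval_neg ν hν f hf] at hlt
    exact lt_irrefl _ hlt
  have h1 : min (ν f) (ν g) ≤ ν (f + g) := hν.2 f g hf hg hfg
  rw [min_eq_left hlt.le] at h1
  have h2 : min (ν (f + g)) (ν (-g)) ≤ ν ((f + g) + (-g)) := by
    apply hν.2 _ _ hfg (neg_ne_zero.mpr hg)
    simpa using hf
  rw [add_neg_cancel_right, isval_neg ν hν g hg] at h2
  rcases min_le_iff.mp h2 with h3 | h3
  · linarith
  · linarith

/-- For key polynomials of the same degree with `ν Q₁ ≤ ν Q₂` and every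
`b ∈ I(Q₁)`, we have `ν(∂_b Q₂) = ν(∂_b Q₁)`. -/
theorem hasseDeriv_val_eq (ν : Polynomial K → ℝ) (hν : IsVal ν)
    (Q₁ Q₂ : Polynomial K) (hQ₁ : IsKeyPol ν Q₁) (hQ₂ : IsKeyPol ν Q₂)
    (hdeg : Q₁.natDegree = Q₂.natDegree) (hval : ν Q₁ ≤ ν Q₂)
    (h : Polynomial K) (hh : Q₂ = Q₁ + h) (hhd : h.degree < Q₁.degree)
    (b : ℕ) (hb : b ∈ Iset ν Q₁) :
    ν (hasseDeriv b Q₂) = ν (hasseDeriv b Q₁) := by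
  obtain ⟨hb1, hbne, hbeq⟩ := hb
  have hsplit : hasseDeriv b Q₂ = hasseDeriv b Q₁ + hasseDeriv b h := by rw [hh, map_add]
  by_cases hdh : hasseDeriv b h = 0
  · rw [hsplit, hdh, add_zero]
  have hh0 : h ≠ 0 := by
    intro h0; exact hdh (by rw [h0, map_zero])
  have hQ1ne : Q₁ ≠ 0 := hQ₁.1.ne_zero
  have hQ2ne : Q₂ ≠ 0 := hQ₂.1.ne_zero
  -- ν Q₁ ≤ ν h
  have hνh : ν Q₁ ≤ ν h := by
    have heq : Q₂ + -Q₁ = h := by rw [hh]; ring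
    have hne : Q₂ + -Q₁ ≠ 0 := by rw [heq]; exact hh0
    have h2 := hν.2 Q₂ (-Q₁) hQ2ne (neg_ne_zero.mpr hQ1ne) hne
    rw [isval_neg ν hν Q₁ hQ1ne, heq, min_eq_right hval] at h2
    exact h2
  -- eps comparison
  have hepslt : eps ν h < eps ν Q₁ :=
    hQ₁.2.2 h hh0 (Polynomial.natDegree_lt_natDegree hh0 hhd)
  -- bound ν (∂_b h) from below
  have hbdd : BddAbove {r : ℝ | ∃ c : ℕ, 1 ≤ c ∧ hasseDeriv c h ≠ 0 ∧
      r = (ν h - ν (hasseDeriv c h)) / c} := by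
    apply Set.Finite.bddAbove
    apply Set.Finite.subset (Set.Finite.image
      (fun c : ℕ => (ν h - ν (hasseDeriv c h)) / c) (Set.finite_Icc 1 h.natDegree))
    rintro r ⟨c, hc1, hcne, rfl⟩
    exact ⟨c, ⟨hc1, not_lt.mp fun hlt =>
      hcne (Polynomial.hasseDeriv_eq_zero_of_lt_natDegree h c hlt)⟩, rfl⟩
  have hle : (ν h - ν (hasseDeriv b h)) / b ≤ eps ν h :=
    le_csSup hbdd ⟨b, hb1, hdh, rfl⟩
  have hbpos : (0:ℝ) < b := by exact_mod_cast hb1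
  rw [div_le_iff₀ hbpos] at hle
  have hkey : ν (hasseDeriv b Q₁) < ν (hasseDeriv b h) := by
    have hmul : (b:ℝ) * eps ν h < b * eps ν Q₁ := by nlinarith
    rw [hbeq]; nlinarith
  rw [hsplit, isval_add_eq ν hν _ _ hbne hdh hkey]
end

section
/- Let Q₁, Q₂ be key polynomials for ν of the same degree with ν(Q₁) = ν(Q₂). Then ε(Q₁) = ε(Q₂) and I(Q₁) = I(Q₂). -/
open Polynomial

variable {K : Type*} [Field K]

namespace EpsAux

variable (ν : Polynomial K → ℝ)

/-- The defining set of `eps`. -/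
def epsSet (f : Polynomial K) : Set ℝ :=
  {r : ℝ | ∃ b : ℕ, 1 ≤ b ∧ hasseDeriv b f ≠ 0 ∧ r = (ν f - ν (hasseDeriv b f)) / b}

lemma eps_def (f : Polynomial K) : eps ν f = sSup (epsSet ν f) := rfl

lemma epsSet_finite (f : Polynomial K) : (epsSet ν f).Finite := by
  apply Set.Finite.subset (Set.Finite.image
    (fun b : ℕ => (ν f - ν (hasseDeriv b f)) / b) (Set.finite_Icc 1 f.natDegree))
  rintro r ⟨b, hb1, hd, rfl⟩
  refine ⟨b, ⟨hb1, ?_⟩, rfl⟩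
  by_contra hlt
  exact hd (hasseDeriv_eq_zero_of_lt_natDegree f b (lt_of_not_ge hlt))

lemma le_eps {f : Polynomial K} {r : ℝ} (hr : r ∈ epsSet ν f) : r ≤ eps ν f :=
  le_csSup (epsSet_finite ν f).bddAbove hr

lemma nu_deriv_ge {f : Polynomial K} {b : ℕ} (hb : 1 ≤ b) (hd : hasseDeriv b f ≠ 0) :
    ν f - b * eps ν f ≤ ν (hasseDeriv b f) := by
  have hmem : (ν f - ν (hasseDeriv b f)) / b ∈ epsSet ν f := ⟨b, hb, hd, rfl⟩
  have hle := le_eps ν hmem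
  have hb' : (0 : ℝ) < b := by exact_mod_cast hb
  rw [div_le_iff₀ hb'] at hle
  nlinarith

lemma val_one (hν : IsVal ν) : ν 1 = 0 := by
  have h := hν.1 1 1 one_ne_zero one_ne_zero
  rw [one_mul] at h; linarith

lemma val_neg (hν : IsVal ν) {f : Polynomial K} (hf : f ≠ 0) : ν (-f) = ν f := by
  have h1 : ν ((-1 : Polynomial K) * (-1)) = ν (-1) + ν (-1) :=
    hν.1 _ _ (by norm_num) (by norm_num)
  rw [neg_mul_neg, one_mul] at h1
  have hm1 : ν (-1 : Polynomial K) = 0 := by have := val_one ν hν; linarith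
  have h2 : ν ((-1 : Polynomial K) * f) = ν (-1) + ν f := hν.1 _ _ (by norm_num) hf
  rw [neg_one_mul] at h2
  rw [h2, hm1, zero_add]

lemma val_add_left (hν : IsVal ν) {f g : Polynomial K} (hf : f ≠ 0) (hg : g ≠ 0)
    (hlt : ν f < ν g) : f + g ≠ 0 ∧ ν (f + g) = ν f := by
  have hne : f + g ≠ 0 := by
    intro h0
    have hgf : g = -f := by linear_combination h0
    rw [hgf, val_neg ν hν hf] at hlt
    exact lt_irrefl _ hlt
  have h1 : min (ν f) (ν g) ≤ ν (f + g) := hν.2 f g hf hg hne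
  rw [min_eq_left hlt.le] at h1
  have h2 : min (ν (f + g)) (ν (-g)) ≤ ν (f + g + -g) :=
    hν.2 _ _ hne (neg_ne_zero.mpr hg) (by simpa using hf)
  rw [add_neg_cancel_right, val_neg ν hν hg] at h2
  constructor
  · exact hne
  · rcases min_le_iff.mp h2 with h | h
    · linarith
    · linarith

lemma eps_pos {Q : Polynomial K} (hQ : IsKeyPol ν Q) : 0 < eps ν Q := by
  have hone : eps ν (1 : Polynomial K) = 0 := by
    rw [eps_def]
    convert Real.sSup_empty using 2
    ext r
    simp only [Set.mem_setOf_eq, Set.mem_empty_iff_false, iff_false]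
    rintro ⟨b, hb, hd, _⟩
    exact hd (hasseDeriv_apply_one b hb)
  have := hQ.2.2 1 one_ne_zero (by simpa using hQ.2.1)
  rw [hone] at this
  linarith

lemma Iset_nonempty (hν : IsVal ν) {Q : Polynomial K} (hQ : IsKeyPol ν Q) :
    ∃ b, b ∈ Iset ν Q := by
  have hd : hasseDeriv Q.natDegree Q ≠ 0 := by
    intro h0
    have hc : (hasseDeriv Q.natDegree Q).coeff 0 = 0 := by rw [h0]; simp
    rw [hasseDeriv_coeff, zero_add, Nat.choose_self, Nat.cast_one, one_mul] at hc
    rw [hQ.1.coeff_natDegree] at hc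
    exact one_ne_zero hc
  have hmem : (ν Q - ν (hasseDeriv Q.natDegree Q)) / Q.natDegree ∈ epsSet ν Q :=
    ⟨Q.natDegree, hQ.2.1, hd, rfl⟩
  have hsup := Set.Nonempty.csSup_mem ⟨_, hmem⟩ (epsSet_finite ν Q)
  rw [← eps_def] at hsup
  obtain ⟨b, hb1, hbd, hbe⟩ := hsup
  refine ⟨b, hb1, hbd, ?_⟩
  have hb' : (0 : ℝ) < b := by exact_mod_cast hb1
  field_simp at hbe
  linarith

lemma key_step (hν : IsVal ν) {Q₁ Q₂ : Polynomial K} (hQ₁ : IsKeyPol ν Q₁)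
    (hQ₂ : IsKeyPol ν Q₂) (hdeg : Q₁.natDegree = Q₂.natDegree) (hval : ν Q₁ = ν Q₂)
    {b : ℕ} (hb : b ∈ Iset ν Q₁) :
    hasseDeriv b Q₂ ≠ 0 ∧ ν (hasseDeriv b Q₂) = ν Q₂ - b * eps ν Q₁ := by
  obtain ⟨hb1, hd1, hv1⟩ := hb
  by_cases heqQ : Q₂ = Q₁
  · subst heqQ
    exact ⟨hd1, by rw [hv1]⟩
  · have hQ₂ne : Q₂ ≠ 0 := hQ₂.1.ne_zero
    have hQ₁ne : Q₁ ≠ 0 := hQ₁.1.ne_zero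
    set h : Polynomial K := Q₂ - Q₁ with hh_def
    have hh : h ≠ 0 := sub_ne_zero.mpr heqQ
    have hdeglt : h.natDegree < Q₁.natDegree := by
      have hdlt : h.degree < Q₂.degree := by
        apply Polynomial.degree_sub_lt _ hQ₂ne
        · rw [hQ₂.1.leadingCoeff, hQ₁.1.leadingCoeff]
        · rw [Polynomial.degree_eq_natDegree hQ₂ne, Polynomial.degree_eq_natDegree hQ₁ne, hdeg]
      have := Polynomial.natDegree_lt_natDegree hh hdlt
      omega
    have hεh : eps ν h < eps ν Q₁ := hQ₁.2.2 h hh hdeglt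
    have hνh : ν Q₁ ≤ ν h := by
      have hmin : min (ν Q₂) (ν (-Q₁)) ≤ ν (Q₂ + -Q₁) :=
        hν.2 _ _ hQ₂ne (neg_ne_zero.mpr hQ₁ne) (by rw [← sub_eq_add_neg]; exact hh)
      rw [val_neg ν hν hQ₁ne, ← sub_eq_add_neg, ← hval, min_self] at hmin
      exact hmin
    have hderiv : hasseDeriv b Q₂ = hasseDeriv b Q₁ + hasseDeriv b h := by
      rw [hh_def, map_sub]; ring
    by_cases hdh : hasseDeriv b h = 0
    · rw [hderiv, hdh, add_zero]
      exact ⟨hd1, by rw [hv1, hval]⟩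
    · have hb' : (1 : ℝ) ≤ (b : ℝ) := by exact_mod_cast hb1
      have hgt : ν (hasseDeriv b Q₁) < ν (hasseDeriv b h) := by
        have h1 := nu_deriv_ge ν hb1 hdh
        have h2 : (b : ℝ) * eps ν h < (b : ℝ) * eps ν Q₁ := by nlinarith
        rw [hv1]; linarith
      obtain ⟨hne, heq⟩ := val_add_left ν hν hd1 hdh hgt
      rw [hderiv]
      exact ⟨hne, by rw [heq, hv1, hval]⟩

lemma eps_le (hν : IsVal ν) {Q₁ Q₂ : Polynomial K} (hQ₁ : IsKeyPol ν Q₁)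
    (hQ₂ : IsKeyPol ν Q₂) (hdeg : Q₁.natDegree = Q₂.natDegree) (hval : ν Q₁ = ν Q₂) :
    eps ν Q₁ ≤ eps ν Q₂ := by
  obtain ⟨b, hb⟩ := Iset_nonempty ν hν hQ₁
  have hb1 := hb.1
  obtain ⟨hne, hv⟩ := key_step ν hν hQ₁ hQ₂ hdeg hval hb
  have hb' : (0 : ℝ) < b := by exact_mod_cast hb1
  have hmem : eps ν Q₁ ∈ epsSet ν Q₂ := by
    refine ⟨b, hb1, hne, ?_⟩
    rw [hv]; field_simp; ring
  exact le_eps ν hmem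

end EpsAux

/-- Key polynomials of the same degree and the same value have the same level
and the same set `I`. -/
theorem eps_eq_of_val_eq (ν : Polynomial K → ℝ) (hν : IsVal ν)
    (Q₁ Q₂ : Polynomial K) (hQ₁ : IsKeyPol ν Q₁) (hQ₂ : IsKeyPol ν Q₂)
    (hdeg : Q₁.natDegree = Q₂.natDegree) (hval : ν Q₁ = ν Q₂) :
    eps ν Q₁ = eps ν Q₂ ∧ Iset ν Q₁ = Iset ν Q₂ := by
  have heps : eps ν Q₁ = eps ν Q₂ :=
    le_antisymm (EpsAux.eps_le ν hν hQ₁ hQ₂ hdeg hval)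
      (EpsAux.eps_le ν hν hQ₂ hQ₁ hdeg.symm hval.symm)
  refine ⟨heps, Set.Subset.antisymm ?_ ?_⟩
  · intro b hb
    obtain ⟨hne, hv⟩ := EpsAux.key_step ν hν hQ₁ hQ₂ hdeg hval hb
    exact ⟨hb.1, hne, by rw [hv, heps]⟩
  · intro b hb
    obtain ⟨hne, hv⟩ := EpsAux.key_step ν hν hQ₂ hQ₁ hdeg.symm hval.symm hb
    exact ⟨hb.1, hne, by rw [hv, heps]⟩
end

section
/- Let Q₁, Q₂ be key polynomials for ν of the same degree with ν(Q₁) < ν(Q₂). Let b₁ ∈ I(Q₁) and b₂ ∈ I(Q₂) and suppose ν(∂_{b₂} Q₂) = ν(∂_{b₂} Q₁) and ν(∂_{b₁} Q₂) = ν(∂_{b₁} Q₁). Then b₂ ≤ b₁. -/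
open Polynomial

variable {K : Type*} [Field K]

lemma hasse_zero_of_lt {K : Type*} [Field K] (f : Polynomial K) (b : ℕ)
    (h : f.natDegree < b) : hasseDeriv b f = 0 := by
  ext k
  rw [Polynomial.hasseDeriv_coeff]
  rw [Polynomial.coeff_eq_zero_of_natDegree_lt (by omega)]
  simp

lemma eps_bddAbove {K : Type*} [Field K] (ν : Polynomial K → ℝ) (f : Polynomial K) :
    BddAbove {r : ℝ | ∃ b : ℕ, 1 ≤ b ∧ hasseDeriv b f ≠ 0 ∧
      r = (ν f - ν (hasseDeriv b f)) / b} := by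
  apply Set.Finite.bddAbove
  apply Set.Finite.subset ((Set.finite_Icc 1 f.natDegree).image
    (fun b => (ν f - ν (hasseDeriv b f)) / b))
  rintro r ⟨b, hb1, hbne, rfl⟩
  exact ⟨b, ⟨hb1, not_lt.1 fun h => hbne (hasse_zero_of_lt f b h)⟩, rfl⟩

lemma le_eps {K : Type*} [Field K] (ν : Polynomial K → ℝ) (f : Polynomial K) (b : ℕ)
    (hb : 1 ≤ b) (hne : hasseDeriv b f ≠ 0) :
    (ν f - ν (hasseDeriv b f)) / b ≤ eps ν f :=
  le_csSup (eps_bddAbove ν f) ⟨b, hb, hne, rfl⟩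

lemma eps_bound {K : Type*} [Field K] (ν : Polynomial K → ℝ) (f : Polynomial K) (b : ℕ)
    (hb : 1 ≤ b) (hne : hasseDeriv b f ≠ 0) :
    ν f - b * eps ν f ≤ ν (hasseDeriv b f) := by
  have hb0 : (0:ℝ) < b := by exact_mod_cast hb
  have := le_eps ν f b hb hne
  rw [div_le_iff₀ hb0] at this
  nlinarith

/-- For key polynomials of the same degree with `ν Q₁ < ν Q₂`, if `b₁ ∈ I(Q₁)`,
`b₂ ∈ I(Q₂)` and the corresponding Hasse derivatives of `Q₁` and `Q₂` have equal
values, then `b₂ ≤ b₁`. -/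
theorem Iset_le (ν : Polynomial K → ℝ) (hν : IsVal ν)
    (Q₁ Q₂ : Polynomial K) (hQ₁ : IsKeyPol ν Q₁) (hQ₂ : IsKeyPol ν Q₂)
    (hdeg : Q₁.natDegree = Q₂.natDegree) (hval : ν Q₁ < ν Q₂)
    (b₁ b₂ : ℕ) (hb₁ : b₁ ∈ Iset ν Q₁) (hb₂ : b₂ ∈ Iset ν Q₂)
    (h₂ : ν (hasseDeriv b₂ Q₂) = ν (hasseDeriv b₂ Q₁))
    (h₁ : ν (hasseDeriv b₁ Q₂) = ν (hasseDeriv b₁ Q₁)) :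
    b₂ ≤ b₁ := by
  obtain ⟨hmul, hadd⟩ := hν
  obtain ⟨hQ₁mon, hQ₁deg, hQ₁key⟩ := hQ₁
  obtain ⟨hQ₂mon, hQ₂deg, _⟩ := hQ₂
  have hQ₁ne : Q₁ ≠ 0 := hQ₁mon.ne_zero
  have hQ₂ne : Q₂ ≠ 0 := hQ₂mon.ne_zero
  have hone : ν 1 = 0 := by have := hmul 1 1 one_ne_zero one_ne_zero; simp at this; linarith
  have hnegone : ν (-1 : Polynomial K) = 0 := by
    have := hmul (-1) (-1) (neg_ne_zero.2 one_ne_zero) (neg_ne_zero.2 one_ne_zero)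
    simp at this; linarith
  have hneg : ∀ g : Polynomial K, g ≠ 0 → ν (-g) = ν g := by
    intro g hg
    have := hmul (-1) g (neg_ne_zero.2 one_ne_zero) hg
    rw [neg_one_mul] at this
    rw [this, hnegone, zero_add]
  set h := Q₂ - Q₁ with hh
  have hne : h ≠ 0 := by
    intro h0
    have : Q₂ = Q₁ := by rwa [hh, sub_eq_zero] at h0
    rw [this] at hval; exact lt_irrefl _ hval
  have hdegh : h.natDegree < Q₁.natDegree := by
    have hde : Q₂.degree = Q₁.degree := by
      rw [Polynomial.degree_eq_natDegree hQ₂ne, Polynomial.degree_eq_natDegree hQ₁ne, hdeg]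
    have := Polynomial.degree_sub_lt hde hQ₂ne (by rw [hQ₂mon.leadingCoeff, hQ₁mon.leadingCoeff])
    rw [hde] at this
    exact Polynomial.natDegree_lt_natDegree hne this
  have hνh : ν Q₁ ≤ ν h := by
    have := hadd Q₂ (-Q₁) hQ₂ne (neg_ne_zero.2 hQ₁ne) (by rw [← sub_eq_add_neg]; exact hne)
    rw [← sub_eq_add_neg, hneg Q₁ hQ₁ne, min_eq_right hval.le] at this
    exact this
  have hepsh : eps ν h < eps ν Q₁ := hQ₁key h hne hdegh
  obtain ⟨hb₁1, hb₁ne, hb₁eq⟩ := hb₁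
  obtain ⟨hb₂1, hb₂ne, hb₂eq⟩ := hb₂
  have hb₁pos : (0:ℝ) < b₁ := by exact_mod_cast hb₁1
  have hb₂pos : (0:ℝ) < b₂ := by exact_mod_cast hb₂1
  have hsub : ∀ b : ℕ, hasseDeriv b Q₂ - hasseDeriv b Q₁ = hasseDeriv b h := by
    intro b; rw [hh, map_sub]
  -- ∂_{b₁} Q₂ ≠ 0
  have hQ2b₁ : hasseDeriv b₁ Q₂ ≠ 0 := by
    by_cases hdh : hasseDeriv b₁ h = 0
    · have : hasseDeriv b₁ Q₂ = hasseDeriv b₁ Q₁ := by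
        have := hsub b₁; rw [hdh, sub_eq_zero] at this; exact this
      rw [this]; exact hb₁ne
    · intro h0
      have hQ1eq : hasseDeriv b₁ Q₁ = -(hasseDeriv b₁ h) := by
        rw [← hsub b₁, h0]; ring
      have hv : ν (hasseDeriv b₁ Q₁) = ν (hasseDeriv b₁ h) := by
        rw [hQ1eq, hneg _ hdh]
      have hlow : ν h - b₁ * eps ν h ≤ ν (hasseDeriv b₁ h) := eps_bound ν h b₁ hb₁1 hdh
      have : ν Q₁ - b₁ * eps ν Q₁ < ν Q₁ - b₁ * eps ν h := by nlinarith
      rw [← hb₁eq, hv] at this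
      nlinarith
  -- ε₁ < ε₂ and b₁ (ε₂ - ε₁) ≥ ν Q₂ - ν Q₁
  have key1 : ν Q₂ - b₁ * eps ν Q₂ ≤ ν Q₁ - b₁ * eps ν Q₁ := by
    have := eps_bound ν Q₂ b₁ hb₁1 hQ2b₁
    rw [h₁, hb₁eq] at this
    linarith
  have hepslt : eps ν Q₁ < eps ν Q₂ := by nlinarith
  -- b₂ (ε₂ - ε₁) ≤ ν Q₂ - ν Q₁
  have key2 : ν Q₁ - b₂ * eps ν Q₁ ≤ ν Q₂ - b₂ * eps ν Q₂ := by
    by_cases hQ1b₂ : hasseDeriv b₂ Q₁ = 0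
    · have hdh : hasseDeriv b₂ Q₂ = hasseDeriv b₂ h := by
        have := hsub b₂; rw [hQ1b₂, sub_zero] at this; exact this
      have hdhne : hasseDeriv b₂ h ≠ 0 := hdh ▸ hb₂ne
      have hlow : ν h - b₂ * eps ν h ≤ ν (hasseDeriv b₂ h) := eps_bound ν h b₂ hb₂1 hdhne
      have : ν (hasseDeriv b₂ Q₂) = ν (hasseDeriv b₂ h) := by rw [hdh]
      rw [hb₂eq] at this
      nlinarith
    · have := eps_bound ν Q₁ b₂ hb₂1 hQ1b₂
      rw [← h₂, hb₂eq] at this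
      linarith
  have : (b₂ : ℝ) ≤ b₁ := by nlinarith
  exact_mod_cast this
end
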